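/- arXiv:2504.21658 — 6 statements merged into one kernel-verified Lean document; each statement's English description precedes it below -/
import Mathlib

section
/- Let i ∈ ℕ and v ∈ ℝ with i + v > 0, and let Z be a Gamma-distributed random variable with shape parameter i + v and rate c > 0. Then for every positive integer L, E[Z^L] = (1/c)^L · ∑_{j=0}^{L} δ_{j,L}(v) · i*_j, where δ_{j,L}(v) = C(L, j) · ∏_{q=j}^{L-1} (q + v) and i*_j is the falling factorial i(i−1)⋯(i−j+1) with i*_0 = 1. -/
/-!
The `L`-th moment of `Gamma(a, c)` is `Γ(a + L) / (Γ(a) cᴸ) = a⁽ᴸ⁾ / cᴸ`, with `a⁽ᴸ⁾` the rising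
factorial. Since `x⁽ᴸ⁾ = (x + L - 1)_L`, the Chu–Vandermonde identity for falling factorials,
applied to `i + (v + L - 1)`, gives `(i + v)⁽ᴸ⁾ = ∑ⱼ C(L, j) (i)_j (v + j)⁽ᴸ⁻ʲ⁾`, and
`(v + j)⁽ᴸ⁻ʲ⁾ = ∏_{q=j}^{L-1} (q + v)`.
-/

open MeasureTheory ProbabilityTheory Polynomial Finset

theorem descPochhammer_smeval_eq_eval {R : Type*} [Ring R] (r : R) (n : ℕ) :
    (descPochhammer ℤ n).smeval r = (descPochhammer R n).eval r := by
  rw [descPochhammer_smeval_eq_ascPochhammer, ascPochhammer_smeval_eq_eval,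
    descPochhammer_eval_eq_ascPochhammer]

theorem ascPochhammer_eval_eq_prod_range {R : Type*} [CommSemiring R] (n : ℕ) (r : R) :
    (ascPochhammer R n).eval r = ∏ k ∈ range n, (r + k) := by
  induction n with
  | zero => simp
  | succ n ih => rw [ascPochhammer_succ_eval, ih, prod_range_succ]

theorem ascPochhammer_eval_add {R : Type*} [Ring R] {r s : R} (h : Commute r s) (n : ℕ) :
    (ascPochhammer R n).eval (r + s) = ∑ j ∈ range (n + 1),
      n.choose j * ((descPochhammer R j).eval r * (ascPochhammer R (n - j)).eval (s + j)) := by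
  -- the rising factorial `x⁽ⁿ⁾` is the falling factorial `(x + n - 1)ₙ`
  have hv := Ring.descPochhammer_smeval_add n
    ((h.add_right (Nat.cast_commute n r).symm).sub_right (Commute.one_right r))
  rw [Nat.sum_antidiagonal_eq_sum_range_succ_mk, descPochhammer_smeval_eq_eval,
    descPochhammer_eval_eq_ascPochhammer, show r + (s + n - 1) - n + 1 = r + s by abel] at hv
  rw [hv]
  refine sum_congr rfl fun j hj => ?_
  have hjn : j ≤ n := Nat.lt_succ_iff.mp (mem_range.mp hj)
  rw [descPochhammer_smeval_eq_eval, descPochhammer_smeval_eq_eval,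
    descPochhammer_eval_eq_ascPochhammer R (s + n - 1), Nat.cast_sub hjn,
    show s + n - 1 - (n - j) + 1 = s + j by abel]

theorem Real.Gamma_add_nat_div_Gamma_eq {a : ℝ} (ha : ∀ k : ℕ, a + k ≠ 0) (n : ℕ) :
    Real.Gamma (a + n) / Real.Gamma a = (ascPochhammer ℝ n).eval a := by
  induction n with
  | zero =>
    have hΓ : Real.Gamma a ≠ 0 := Real.Gamma_ne_zero fun m hm => ha m (by rw [hm, neg_add_cancel])
    simp [hΓ]
  | succ n ih =>
    rw [ascPochhammer_succ_eval, ← ih, Nat.cast_succ, ← add_assoc, Real.Gamma_add_one (ha n)]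
    ring

theorem integral_gammaMeasure {a r : ℝ} (ha : 0 < a) (hr : 0 < r) (g : ℝ → ℝ) :
    ∫ x, g x ∂gammaMeasure a r = ∫ x, gammaPDFReal a r x * g x := by
  rw [gammaMeasure, integral_withDensity_eq_integral_toReal_smul (f := gammaPDF a r)
    (measurable_gammaPDFReal a r).ennreal_ofReal (ae_of_all _ fun _ => ENNReal.ofReal_lt_top)]
  simp only [gammaPDF, ENNReal.toReal_ofReal (gammaPDFReal_nonneg ha hr _), smul_eq_mul]

theorem integral_pow_gammaMeasure {a r : ℝ} (ha : 0 < a) (hr : 0 < r) (n : ℕ) :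
    ∫ x, x ^ n ∂gammaMeasure a r = (1 / r) ^ n * (Real.Gamma (a + n) / Real.Gamma a) := by
  have hpdf : ∀ x > 0, gammaPDFReal a r x * x ^ n =
      r ^ a / Real.Gamma a * (x ^ (a + n - 1) * Real.exp (-(r * x))) := fun x hx => by
    rw [gammaPDFReal, if_pos hx.le, add_sub_right_comm, Real.rpow_add_natCast hx.ne']
    ring
  rw [integral_gammaMeasure ha hr, ← setIntegral_eq_integral_of_forall_compl_eq_zero
      (s := Set.Ici 0) fun x (hx : ¬0 ≤ x) => by rw [gammaPDFReal, if_neg hx, zero_mul],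
    integral_Ici_eq_integral_Ioi, setIntegral_congr_fun measurableSet_Ioi hpdf,
    integral_const_mul, Real.integral_rpow_mul_exp_neg_mul_Ioi (by positivity) hr,
    Real.rpow_add (by positivity), Real.rpow_natCast, Real.div_rpow zero_le_one hr.le,
    Real.one_rpow]
  field_simp

theorem stmt1_general {Ω : Type*} [MeasureSpace Ω]
    (i : ℕ) (v c : ℝ) (hv : 0 < (i : ℝ) + v) (hc : 0 < c)
    (Z : Ω → ℝ) (hZ : Measurable Z)
    (hlaw : Measure.map Z ℙ = gammaMeasure ((i : ℝ) + v) c)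
    (L : ℕ) :
    ∫ ω, (Z ω) ^ L ∂ℙ =
      (1 / c) ^ L * ∑ j ∈ Finset.range (L + 1),
        ((Nat.choose L j : ℝ) * ∏ q ∈ Finset.Ico j L, ((q : ℝ) + v)) *
          (Nat.descFactorial i j : ℝ) := by
  have hshape : ∀ k : ℕ, (i : ℝ) + v + k ≠ 0 := fun k => by positivity
  calc ∫ ω, (Z ω) ^ L ∂ℙ = ∫ x, x ^ L ∂(Measure.map Z ℙ) :=
        (integral_map hZ.aemeasurable (continuous_pow L).aestronglyMeasurable).symm
    _ = (1 / c) ^ L * (ascPochhammer ℝ L).eval ((i : ℝ) + v) := by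
      rw [hlaw, integral_pow_gammaMeasure hv hc, Real.Gamma_add_nat_div_Gamma_eq hshape]
    _ = _ := by
      rw [ascPochhammer_eval_add (Commute.all _ _)]
      refine congrArg _ (sum_congr rfl fun j _ => ?_)
      rw [descPochhammer_eval_eq_descFactorial, ascPochhammer_eval_eq_prod_range,
        prod_Ico_eq_prod_range]
      have hprod : ∏ k ∈ range (L - j), (v + j + k) =
          ∏ k ∈ range (L - j), (((j + k : ℕ) : ℝ) + v) :=
        prod_congr rfl fun k _ => by push_cast; ring
      rw [hprod]
      ring

/-- If `Z` is a Gamma random variable with shape `i + v > 0` and rate `c > 0`, then for every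
positive integer `L`, `E[Z^L] = (1/c)^L ∑_{j=0}^L δ_{j,L}(v) i*_j`, where
`δ_{j,L}(v) = C(L,j) ∏_{q=j}^{L-1}(q+v)` and `i*_j` is the falling factorial. -/
theorem stmt1 {Ω : Type*} [MeasureSpace Ω] [IsProbabilityMeasure (ℙ : Measure Ω)]
    (i : ℕ) (v c : ℝ) (hv : 0 < (i : ℝ) + v) (hc : 0 < c)
    (Z : Ω → ℝ) (hZ : Measurable Z)
    (hlaw : Measure.map Z ℙ = gammaMeasure ((i : ℝ) + v) c)
    (L : ℕ) (hL : 0 < L) :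
    ∫ ω, (Z ω) ^ L ∂ℙ =
      (1 / c) ^ L * ∑ j ∈ Finset.range (L + 1),
        ((Nat.choose L j : ℝ) * ∏ q ∈ Finset.Ico j L, ((q : ℝ) + v)) *
          (Nat.descFactorial i j : ℝ) :=
  stmt1_general i v c hv hc Z hZ hlaw L
end

section
/- Let η(y) = (1/√(2π)) e^{−y²/2} be the standard Gaussian density and let H_j denote the j-th Hermite polynomial defined by η^{(j)}(y) = (−1)^j H_j(y) η(y). Define coefficients c_{j,m} recursively by c_{1,1} = −1 and, for m ≥ 2 and 1 ≤ j ≤ m, c_{j,m} = (2j/(m−1) − 4) c_{j,m−1} · 1_{j<m} + (2/(m−1)) c_{j−1,m−1} · 1_{j>1}. Then for every m ≥ 1 and every real y, y^{2m} = ∑_{j=1}^{m} (−1)^{m+j} (c_{j,m}/c_{m,m}) y^j H_j(y). -/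
/-- The coefficients `c_{j,m}` (here `ccoef m j`), defined by `c_{1,1} = -1` and, for `m ≥ 2`,
`c_{j,m} = (2j/(m-1) - 4) c_{j,m-1} 1_{j<m} + (2/(m-1)) c_{j-1,m-1} 1_{j>1}`. -/
noncomputable def ccoef : ℕ → ℕ → ℝ
  | 0, _ => 0
  | 1, j => if j = 1 then -1 else 0
  | (m + 2), j =>
      (if j < m + 2 then (2 * (j : ℝ) / ((m : ℝ) + 1) - 4) * ccoef (m + 1) j else 0) +
      (if 1 < j then (2 / ((m : ℝ) + 1)) * ccoef (m + 1) (j - 1) else 0)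

/-- The standard Gaussian density `η(y) = (1/√(2π)) e^{-y²/2}`. -/
noncomputable def gaussDensity (y : ℝ) : ℝ :=
  (Real.sqrt (2 * Real.pi))⁻¹ * Real.exp (-y ^ 2 / 2)

/-!
Write `g_j = X^j He_j` with `He_j` Mathlib's (probabilists') Hermite polynomials. The recursion
`He_{j+1} = X He_j - He_j'` gives `X² g_j = g_{j+1} + X g_j' - j g_j`, so the operator
`P ↦ X² P - X P' + 2m P`, which sends `X^{2m}` to `X^{2m+2}` by Euler's identity
`X (X^{2m})' = 2m X^{2m}`, sends `∑ b_j g_j` to `∑ (b_{j-1} + (2m - j) b_j) g_j`. Normalising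
`c_{j,m}` by `(-1)^{m+j} / c_{m,m}` turns its defining recursion into exactly this one, so
induction on `m` gives `X^{2m} = ∑ (-1)^{m+j} (c_{j,m}/c_{m,m}) g_j`. Finally the functions `H_j`
of the statement are forced to be `He_j`, since `η^{(j)} = (-1)^j He_j η` and `η > 0`.
-/

open Polynomial Finset

theorem gaussDensity_pos (y : ℝ) : 0 < gaussDensity y := by
  unfold gaussDensity
  positivity

theorem iteratedDeriv_gaussDensity (n : ℕ) (y : ℝ) :
    iteratedDeriv n gaussDensity y = (-1 : ℝ) ^ n * aeval y (hermite n) * gaussDensity y := by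
  have h : gaussDensity = fun x => (Real.sqrt (2 * Real.pi))⁻¹ * Real.exp (-(x ^ 2 / 2)) := by
    funext x
    rw [gaussDensity, neg_div]
  rw [h, iteratedDeriv_const_mul_field, iteratedDeriv_eq_iterate,
    deriv_gaussian_eq_hermite_mul_gaussian]
  ring

theorem eq_aeval_hermite_of_iteratedDeriv_gaussDensity {H : ℕ → ℝ → ℝ}
    (hH : ∀ j y, iteratedDeriv j gaussDensity y = (-1 : ℝ) ^ j * H j y * gaussDensity y)
    (j : ℕ) (y : ℝ) : H j y = aeval y (hermite j) := by
  have h := hH j y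
  rw [iteratedDeriv_gaussDensity] at h
  exact mul_left_cancel₀ (pow_ne_zero j (by norm_num))
    (mul_right_cancel₀ (gaussDensity_pos y).ne' h.symm)

section HermiteExpansion

variable {R : Type*} [CommRing R]

theorem X_mul_derivative_X_pow (n : ℕ) : X * derivative (X ^ n : R[X]) = (n : R[X]) * X ^ n := by
  rcases n with _ | n
  · simp
  · rw [derivative_X_pow, C_eq_natCast]
    push_cast
    ring

variable (R) in
noncomputable def xPowHermite (j : ℕ) : R[X] := X ^ j * (hermite j).map (algebraMap ℤ R)

theorem eval_xPowHermite (j : ℕ) (y : R) :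
    (xPowHermite R j).eval y = y ^ j * aeval y (hermite j) := by
  rw [xPowHermite, eval_mul, eval_pow, eval_X, eval_map_algebraMap]

theorem X_sq_mul_xPowHermite (j : ℕ) :
    X ^ 2 * xPowHermite R j =
      xPowHermite R (j + 1) + X * derivative (xPowHermite R j) - (j : R[X]) * xPowHermite R j := by
  rw [xPowHermite, xPowHermite, hermite_succ, Polynomial.map_sub, Polynomial.map_mul, map_X,
    ← derivative_map, derivative_mul, mul_add, ← mul_assoc X, X_mul_derivative_X_pow]
  ring

theorem X_pow_succ_eq_sum_xPowHermite {m : ℕ} {b b' : ℕ → R}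
    (hb : X ^ (2 * m) = ∑ j ∈ range (m + 1), C (b j) * xPowHermite R j)
    (hbm : b (m + 1) = 0) (hb'_zero : b' 0 = 2 * m * b 0)
    (hb' : ∀ j, b' (j + 1) = b j + (2 * m - (j + 1)) * b (j + 1)) :
    X ^ (2 * (m + 1)) = ∑ j ∈ range (m + 2), C (b' j) * xPowHermite R j := by
  have euler : X * derivative (X ^ (2 * m) : R[X]) = (2 * m : R[X]) * X ^ (2 * m) := by
    rw [X_mul_derivative_X_pow]
    push_cast
    ring
  calc X ^ (2 * (m + 1))
      = X ^ 2 * X ^ (2 * m) - X * derivative (X ^ (2 * m)) + (2 * m : R[X]) * X ^ (2 * m) := by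
        rw [euler]
        ring
    _ = ∑ j ∈ range (m + 1), (C (b j) * xPowHermite R (j + 1)
          + C ((2 * m - j) * b j) * xPowHermite R j) := by
        rw [hb, mul_sum, derivative_sum, mul_sum, mul_sum, ← sum_sub_distrib, ← sum_add_distrib]
        refine sum_congr rfl fun j _ => ?_
        simp only [derivative_C_mul, map_mul, map_sub, map_natCast, map_ofNat]
        linear_combination C (b j) * X_sq_mul_xPowHermite (R := R) j
    _ = ∑ j ∈ range (m + 1), C (b j) * xPowHermite R (j + 1)
          + ∑ j ∈ range (m + 2), C ((2 * m - j) * b j) * xPowHermite R j := by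
        rw [sum_add_distrib, sum_range_succ _ (m + 1), hbm, mul_zero, C_0, zero_mul, add_zero]
    _ = ∑ j ∈ range (m + 2), C (b' j) * xPowHermite R j := by
        rw [sum_range_succ' _ (m + 1), sum_range_succ' _ (m + 1)]
        simp only [hb', hb'_zero, C_add, add_mul, sum_add_distrib]
        push_cast
        rw [sub_zero, add_assoc]

end HermiteExpansion

theorem ccoef_zero_right : ∀ m, ccoef m 0 = 0
  | 0 => rfl
  | 1 => by simp [ccoef]
  | m + 2 => by simp [ccoef, ccoef_zero_right (m + 1)]

theorem ccoef_of_lt : ∀ {m j : ℕ}, m < j → ccoef m j = 0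
  | 0, _, _ => rfl
  | 1, j, h => by simp [ccoef, h.ne']
  | m + 2, j, h => by
    simp [ccoef, h.not_gt, ccoef_of_lt (m := m + 1) (j := j - 1) (by omega)]

theorem ccoef_add_two (n j : ℕ) :
    ccoef (n + 2) j =
      (2 * j / (n + 1) - 4) * ccoef (n + 1) j + 2 / (n + 1) * ccoef (n + 1) (j - 1) := by
  rw [ccoef]
  congr 1
  · split_ifs with h
    · rfl
    · rw [ccoef_of_lt (by omega), mul_zero]
  · split_ifs with h
    · rfl
    · rw [show j - 1 = 0 by omega, ccoef_zero_right, mul_zero]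

theorem ccoef_add_two_self (n : ℕ) :
    ccoef (n + 2) (n + 2) = 2 / (n + 1) * ccoef (n + 1) (n + 1) := by
  rw [ccoef_add_two, ccoef_of_lt (by omega), mul_zero, zero_add]
  rfl

theorem ccoef_self_ne_zero {m : ℕ} (hm : 1 ≤ m) : ccoef m m ≠ 0 := by
  induction m, hm using Nat.le_induction with
  | base => simp [ccoef]
  | succ n hn ih =>
    obtain ⟨n, rfl⟩ := Nat.exists_eq_add_of_le' hn
    rw [ccoef_add_two_self]
    positivity

noncomputable def normalizedCcoef (m j : ℕ) : ℝ := (-1) ^ (m + j) * (ccoef m j / ccoef m m)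

theorem normalizedCcoef_of_lt {m j : ℕ} (h : m < j) : normalizedCcoef m j = 0 := by
  rw [normalizedCcoef, ccoef_of_lt h, zero_div, mul_zero]

theorem normalizedCcoef_zero_right (m : ℕ) : normalizedCcoef m 0 = 0 := by
  rw [normalizedCcoef, ccoef_zero_right, zero_div, mul_zero]

theorem normalizedCcoef_one_one : normalizedCcoef 1 1 = 1 := by
  simp [normalizedCcoef, ccoef]

theorem normalizedCcoef_add_two_succ (n j : ℕ) :
    normalizedCcoef (n + 2) (j + 1) = normalizedCcoef (n + 1) j
      + (2 * ((n + 1 : ℕ) : ℝ) - (j + 1)) * normalizedCcoef (n + 1) (j + 1) := by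
  have hc := ccoef_self_ne_zero (m := n + 1) (by omega)
  rw [normalizedCcoef, normalizedCcoef, normalizedCcoef, ccoef_add_two, ccoef_add_two_self,
    Nat.add_sub_cancel, show n + 2 + (j + 1) = n + 1 + j + 2 by ring,
    show n + 1 + (j + 1) = n + 1 + j + 1 by ring, pow_add, pow_succ]
  field_simp
  push_cast
  ring

theorem X_pow_eq_sum_normalizedCcoef {m : ℕ} (hm : 1 ≤ m) :
    (X ^ (2 * m) : ℝ[X]) = ∑ j ∈ range (m + 1), C (normalizedCcoef m j) * xPowHermite ℝ j := by
  induction m, hm using Nat.le_induction with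
  | base =>
    rw [sum_range_succ, sum_range_one, normalizedCcoef_zero_right, normalizedCcoef_one_one, C_0,
      C_1, zero_mul, zero_add, one_mul, xPowHermite, hermite_one, map_X]
    ring
  | succ n hn ih =>
    obtain ⟨n, rfl⟩ := Nat.exists_eq_add_of_le' hn
    refine X_pow_succ_eq_sum_xPowHermite ih (normalizedCcoef_of_lt (by omega)) ?_
      (normalizedCcoef_add_two_succ n)
    rw [normalizedCcoef_zero_right, normalizedCcoef_zero_right, mul_zero]

theorem pow_two_mul_eq_sum_normalizedCcoef {m : ℕ} (hm : 1 ≤ m) (y : ℝ) :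
    y ^ (2 * m) = ∑ j ∈ Icc 1 m, normalizedCcoef m j * y ^ j * aeval y (hermite j) := by
  have h := congrArg (eval y) (X_pow_eq_sum_normalizedCcoef hm)
  simp only [eval_pow, eval_X, eval_finsetSum, eval_mul, eval_C, eval_xPowHermite] at h
  rw [h, sum_subset (fun j hj => mem_range.2 (Nat.lt_succ_of_le (mem_Icc.1 hj).2))]
  · exact sum_congr rfl fun j _ => by ring
  · intro j hj hj'
    have hj0 : j = 0 := by
      rw [mem_range] at hj
      rw [mem_Icc] at hj'
      omega
    rw [hj0, normalizedCcoef_zero_right, zero_mul, zero_mul]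

/-- With `H_j` the Hermite polynomials defined by `η^{(j)}(y) = (-1)^j H_j(y) η(y)`, one has
`y^{2m} = ∑_{j=1}^m (-1)^{m+j} (c_{j,m}/c_{m,m}) y^j H_j(y)` for all `m ≥ 1` and `y ∈ ℝ`. -/
theorem stmt2 (H : ℕ → ℝ → ℝ)
    (hH : ∀ (j : ℕ) (y : ℝ),
      iteratedDeriv j gaussDensity y = (-1 : ℝ) ^ j * H j y * gaussDensity y)
    (m : ℕ) (hm : 1 ≤ m) (y : ℝ) :
    y ^ (2 * m) =
      ∑ j ∈ Finset.Icc 1 m,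
        (-1 : ℝ) ^ (m + j) * (ccoef m j / ccoef m m) * y ^ j * H j y := by
  simp_rw [eq_aeval_hermite_of_iteratedDeriv_gaussDensity hH]
  exact pow_two_mul_eq_sum_normalizedCcoef hm y
end

section
/- Let g : [0,∞) → ℝ be of class C^{2n}, let β ≥ 0 and γ ≥ β²/4, and define ψ_g(x) = g(x + β√x + γ) + g(x − β√x + γ) for x ≥ 0. Then ψ_g is of class C^n on [0,∞) and its n-th derivative satisfies ψ_g^{(n)}(x) = ψ_{g^{(n)}}(x) + ∑_{j=1}^{n} C(n, j) β^{2j} ∫_0^1 g^{(n+j)}(x + β(2u−1)√x + γ) · (u − u²)^{j−1}/(j−1)! du. -/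
/-!
Write `φ(x, u) = x + β (2u - 1) √x + γ`, so that `ψ_f(x) = f(φ(x, 1)) + f(φ(x, 0))` and the
integrals of the formula run along the chord `u ↦ φ(x, u)`. Differentiating in `x` produces the
singular factor `∂ₓφ = 1 + β (2u - 1) / (2√x)`, but `∂ᵤφ = 2β√x`, so the singular part is a
`u`-derivative divided by `2√x`: for `ψ_f` it is `β / (2√x) · (f'(φ(x,1)) - f'(φ(x,0)))`, which
the fundamental theorem of calculus along the chord turns into `β² ∫₀¹ f''(φ(x,u)) du`, and for
the integral terms an integration by parts against `(u - u²)^{j+1} / (j+1)!` does the same.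
Hence every term `T_j f` of the expansion satisfies `(T_j f)' = T_j f' + β² T_{j+1} f''` for
`x > 0`, and, both sides being continuous on `[0, ∞)`, also at `x = 0`. Pascal's rule then shows
that `∑_j C(m, j) β^{2j} T_j g^{(m+j)}` differentiates to the same expression with `m + 1`.
-/

open Set Filter Topology MeasureTheory Interval Real
open scoped Nat

section ParametricIntegral

variable {E : Type*} [NormedAddCommGroup E] [NormedSpace ℝ E] {G G' : ℝ → ℝ → E} {s : Set ℝ}
  {a b : ℝ}

theorem continuousOn_intervalIntegral_of_continuousOn_prod (hs : IsClosed s) (hab : a ≤ b)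
    (hG : ContinuousOn G.uncurry (s ×ˢ Icc a b)) :
    ContinuousOn (fun x => ∫ t in a..b, G x t) s := by
  intro x₀ hx₀
  obtain ⟨C, hC⟩ := ((isCompact_closedBall x₀ 1).inter_right hs |>.prod isCompact_Icc)
    |>.exists_bound_of_continuousOn (hG.mono (prod_mono inter_subset_right subset_rfl))
  have hIoc : Ι a b = Ioc a b := uIoc_of_le hab
  refine intervalIntegral.continuousWithinAt_of_dominated_interval (bound := fun _ => C)
    ?_ ?_ intervalIntegrable_const ?_
  · filter_upwards [self_mem_nhdsWithin] with x hx
    rw [hIoc]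
    exact ((hG.uncurry_left x hx).mono Ioc_subset_Icc_self).aestronglyMeasurable measurableSet_Ioc
  · filter_upwards [self_mem_nhdsWithin,
      mem_nhdsWithin_of_mem_nhds (Metric.closedBall_mem_nhds x₀ one_pos)] with x hxs hxb
    refine ae_of_all _ fun t ht => hC (x, t) ⟨⟨hxb, hxs⟩, ?_⟩
    rw [hIoc] at ht
    exact Ioc_subset_Icc_self ht
  · refine ae_of_all _ fun t ht => ?_
    rw [hIoc] at ht
    exact hG.uncurry_right t (Ioc_subset_Icc_self ht) x₀ hx₀

theorem hasDerivAt_intervalIntegral_of_continuousOn_prod (hs : IsOpen s) {x₀ : ℝ} (hx₀ : x₀ ∈ s)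
    (hab : a ≤ b) (hG : ∀ x ∈ s, ContinuousOn (G x) (Icc a b))
    (hG' : ContinuousOn G'.uncurry (s ×ˢ Icc a b))
    (hGG' : ∀ x ∈ s, ∀ t ∈ Icc a b, HasDerivAt (G · t) (G' x t) x) :
    HasDerivAt (fun x => ∫ t in a..b, G x t) (∫ t in a..b, G' x₀ t) x₀ := by
  obtain ⟨r, hr, hrs⟩ := Metric.nhds_basis_closedBall.mem_iff.1 (hs.mem_nhds hx₀)
  obtain ⟨C, hC⟩ := ((isCompact_closedBall x₀ r).prod isCompact_Icc).exists_bound_of_continuousOn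
    (hG'.mono (prod_mono hrs subset_rfl))
  have hIoc : Ι a b = Ioc a b := uIoc_of_le hab
  refine (intervalIntegral.hasDerivAt_integral_of_dominated_loc_of_deriv_le
    (bound := fun _ => C) (Metric.ball_mem_nhds x₀ hr) ?_ ?_ ?_ ?_ intervalIntegrable_const ?_).2
  · filter_upwards [hs.mem_nhds hx₀] with x hx
    rw [hIoc]
    exact ((hG x hx).mono Ioc_subset_Icc_self).aestronglyMeasurable measurableSet_Ioc
  · exact (hG x₀ hx₀).intervalIntegrable_of_Icc hab
  · rw [hIoc]
    exact ((hG'.uncurry_left x₀ hx₀).mono Ioc_subset_Icc_self).aestronglyMeasurable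
      measurableSet_Ioc
  · refine ae_of_all _ fun t ht x hx => hC (x, t) ⟨Metric.ball_subset_closedBall hx, ?_⟩
    rw [hIoc] at ht
    exact Ioc_subset_Icc_self ht
  · refine ae_of_all _ fun t ht x hx => hGG' x (hrs (Metric.ball_subset_closedBall hx)) t ?_
    rw [hIoc] at ht
    exact Ioc_subset_Icc_self ht

end ParametricIntegral

theorem hasDerivWithinAt_Ici_of_hasDerivAt_Ioi {E : Type*} [NormedAddCommGroup E]
    [NormedSpace ℝ E] {F F' : ℝ → E} {a x : ℝ} (hF : ContinuousOn F (Ici a))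
    (hF' : ContinuousOn F' (Ici a)) (h : ∀ y ∈ Ioi a, HasDerivAt F (F' y) y) (hx : x ∈ Ici a) :
    HasDerivWithinAt F (F' x) (Ici a) x := by
  rcases (mem_Ici.1 hx).eq_or_lt with rfl | hax
  · refine hasDerivWithinAt_Ici_of_tendsto_deriv (s := Ioi a)
      (fun y hy => (h y hy).differentiableAt.differentiableWithinAt)
      ((hF a hx).mono Ioi_subset_Ici_self) self_mem_nhdsWithin ?_
    refine ((hF' a hx).mono_left (nhdsWithin_mono _ Ioi_subset_Ici_self)).congr' ?_
    filter_upwards [self_mem_nhdsWithin] with y hy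
    exact (h y hy).deriv.symm
  · exact (h x hax).hasDerivWithinAt

section IteratedDeriv

variable {𝕜 : Type*} [NontriviallyNormedField 𝕜] {E : Type*} [NormedAddCommGroup E]
  [NormedSpace 𝕜 E] {s : Set 𝕜}

theorem ContDiffOn.hasDerivWithinAt_iteratedDerivWithin {f : 𝕜 → E} {n : WithTop ℕ∞} {m : ℕ}
    (h : ContDiffOn 𝕜 n f s) (hs : UniqueDiffOn 𝕜 s) (hm : m < n) {x : 𝕜} (hx : x ∈ s) :
    HasDerivWithinAt (iteratedDerivWithin m f s) (iteratedDerivWithin (m + 1) f s x) s x := by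
  rw [iteratedDerivWithin_succ]
  exact (h.differentiableOn_iteratedDerivWithin hm hs x hx).hasDerivWithinAt

variable {F : ℕ → 𝕜 → E} {n : ℕ}

theorem iteratedDerivWithin_eq_of_hasDerivWithinAt_succ (hs : UniqueDiffOn 𝕜 s)
    (hF : ∀ m < n, ∀ x ∈ s, HasDerivWithinAt (F m) (F (m + 1) x) s x) :
    ∀ m ≤ n, EqOn (iteratedDerivWithin m (F 0) s) (F m) s := by
  intro m
  induction m with
  | zero => exact fun _ x _ => congrFun iteratedDerivWithin_zero x
  | succ m ih =>
    intro hm x hx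
    rw [iteratedDerivWithin_succ, derivWithin_congr (ih (by omega)) (ih (by omega) hx)]
    exact (hF m hm x hx).derivWithin (hs x hx)

theorem contDiffOn_of_hasDerivWithinAt_succ (hs : UniqueDiffOn 𝕜 s)
    (hF : ∀ m < n, ∀ x ∈ s, HasDerivWithinAt (F m) (F (m + 1) x) s x)
    (hFn : ContinuousOn (F n) s) : ContDiffOn 𝕜 n (F 0) s := by
  have heq := iteratedDerivWithin_eq_of_hasDerivWithinAt_succ hs hF
  refine contDiffOn_of_continuousOn_differentiableOn_deriv (fun m hm => ?_) (fun m hm => ?_)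
  · have hm : m ≤ n := by exact_mod_cast hm
    refine ContinuousOn.congr ?_ (heq m hm)
    rcases hm.lt_or_eq with hm | rfl
    · exact fun x hx => (hF m hm x hx).continuousWithinAt
    · exact hFn
  · have hm : m < n := by exact_mod_cast hm
    exact fun x hx => (hF m hm x hx).differentiableWithinAt.congr (heq m hm.le) (heq m hm.le hx)

end IteratedDeriv

noncomputable def chordPoint (β γ x u : ℝ) : ℝ := x + β * (2 * u - 1) * √x + γ

/-- `T_j f` of the expansion, with `T_0 f = ψ_f`; the weights are normalised by `j!` so that the
derivative rule for `T_j` is uniform in `j`. -/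
noncomputable def psiTerm (β γ : ℝ) : ℕ → (ℝ → ℝ) → ℝ → ℝ
  | 0, f, x => f (chordPoint β γ x 1) + f (chordPoint β γ x 0)
  | j + 1, f, x => ∫ u in (0 : ℝ)..1, f (chordPoint β γ x u) * ((u - u ^ 2) ^ j / j !)

noncomputable def psiIterDeriv (g : ℝ → ℝ) (β γ : ℝ) (m : ℕ) (x : ℝ) : ℝ :=
  ∑ j ∈ Finset.range (m + 1),
    (m.choose j : ℝ) * β ^ (2 * j) * psiTerm β γ j (iteratedDerivWithin (m + j) g (Ici 0)) x

variable {β γ : ℝ}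

section ChordPoint

theorem chordPoint_one (x : ℝ) : chordPoint β γ x 1 = x + β * √x + γ := by
  unfold chordPoint
  ring

theorem chordPoint_zero (x : ℝ) : chordPoint β γ x 0 = x - β * √x + γ := by
  unfold chordPoint
  ring

theorem chordPoint_nonneg (hβ : 0 ≤ β) (hγ : β ^ 2 / 4 ≤ γ) {x u : ℝ} (hx : 0 ≤ x)
    (hu : u ∈ Icc (0 : ℝ) 1) : 0 ≤ chordPoint β γ x u := by
  have hs : √x ^ 2 = x := sq_sqrt hx
  have := mul_nonneg (mul_nonneg hβ (sqrt_nonneg x)) hu.1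
  unfold chordPoint
  nlinarith [sq_nonneg (√x - β / 2)]

theorem continuous_chordPoint : Continuous fun p : ℝ × ℝ => chordPoint β γ p.1 p.2 := by
  unfold chordPoint
  fun_prop

theorem hasDerivAt_chordPoint_left {x : ℝ} (u : ℝ) (hx : 0 < x) :
    HasDerivAt (chordPoint β γ · u) (1 + β * (2 * u - 1) / (2 * √x)) x :=
  ((hasDerivAt_id' x).add ((hasDerivAt_sqrt hx.ne').const_mul (β * (2 * u - 1)))).add_const γ
    |>.congr_deriv (by ring)

theorem hasDerivAt_chordPoint_right (x u : ℝ) :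
    HasDerivAt (chordPoint β γ x) (2 * β * √x) u :=
  (((hasDerivAt_id' u).const_mul 2).sub_const 1).const_mul β |>.mul_const √x
    |>.const_add x |>.add_const γ |>.congr_deriv (by ring)

variable {f f' : ℝ → ℝ}

theorem continuousOn_comp_chordPoint (hβ : 0 ≤ β) (hγ : β ^ 2 / 4 ≤ γ)
    (hf : ContinuousOn f (Ici 0)) :
    ContinuousOn (Function.uncurry fun x u => f (chordPoint β γ x u)) (Ici 0 ×ˢ Icc 0 1) :=
  hf.comp continuous_chordPoint.continuousOn fun _ hp => chordPoint_nonneg hβ hγ hp.1 hp.2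

theorem hasDerivAt_comp_chordPoint_left (hβ : 0 ≤ β) (hγ : β ^ 2 / 4 ≤ γ)
    (hf : ∀ y ∈ Ici 0, HasDerivWithinAt f (f' y) (Ici 0) y) {x u : ℝ} (hx : 0 < x)
    (hu : u ∈ Icc (0 : ℝ) 1) :
    HasDerivAt (fun x => f (chordPoint β γ x u))
      (f' (chordPoint β γ x u) * (1 + β * (2 * u - 1) / (2 * √x))) x :=
  ((hf _ (chordPoint_nonneg hβ hγ hx.le hu)).comp x
    (hasDerivAt_chordPoint_left u hx).hasDerivWithinAt
    fun _ hy => chordPoint_nonneg hβ hγ hy hu).hasDerivAt (Ici_mem_nhds hx)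

theorem hasDerivWithinAt_comp_chordPoint_right (hβ : 0 ≤ β) (hγ : β ^ 2 / 4 ≤ γ)
    (hf : ∀ y ∈ Ici 0, HasDerivWithinAt f (f' y) (Ici 0) y) {x u : ℝ} (hx : 0 ≤ x)
    (hu : u ∈ Icc (0 : ℝ) 1) :
    HasDerivWithinAt (fun u => f (chordPoint β γ x u))
      (f' (chordPoint β γ x u) * (2 * β * √x)) (Icc 0 1) u :=
  (hf _ (chordPoint_nonneg hβ hγ hx hu)).comp u (hasDerivAt_chordPoint_right x u).hasDerivWithinAt
    fun _ hv => chordPoint_nonneg hβ hγ hx hv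

theorem sub_eq_mul_psiTerm_one (hβ : 0 ≤ β) (hγ : β ^ 2 / 4 ≤ γ)
    (hf : ∀ y ∈ Ici 0, HasDerivWithinAt f (f' y) (Ici 0) y) (hf' : ContinuousOn f' (Ici 0))
    {x : ℝ} (hx : 0 ≤ x) :
    f (chordPoint β γ x 1) - f (chordPoint β γ x 0) = 2 * β * √x * psiTerm β γ 1 f' x := by
  have hderiv : ∀ u ∈ Icc (0 : ℝ) 1, _ := fun u hu =>
    hasDerivWithinAt_comp_chordPoint_right hβ hγ hf hx hu
  rw [← intervalIntegral.integral_eq_sub_of_hasDerivAt_of_le zero_le_one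
    (fun u hu => (hderiv u hu).continuousWithinAt)
    (fun u hu => (hderiv u (Ioo_subset_Icc_self hu)).hasDerivAt (Icc_mem_nhds hu.1 hu.2))
    (((continuousOn_comp_chordPoint hβ hγ hf').uncurry_left x hx).mul
      continuousOn_const |>.intervalIntegrable_of_Icc zero_le_one)]
  simp only [psiTerm, pow_zero, Nat.factorial_zero, Nat.cast_one, div_one, mul_one,
    ← intervalIntegral.integral_const_mul]
  exact intervalIntegral.integral_congr fun u _ => mul_comm _ _

theorem hasDerivAt_sub_sq_pow_div_factorial (j : ℕ) (u : ℝ) :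
    HasDerivAt (fun u : ℝ => (u - u ^ 2) ^ (j + 1) / (j + 1)!)
      ((1 - 2 * u) * ((u - u ^ 2) ^ j / j !)) u := by
  refine (((hasDerivAt_id' u).fun_sub (hasDerivAt_pow 2 u)).pow (j + 1)).div_const
    ((j + 1)! : ℝ) |>.congr_deriv ?_
  rw [Nat.factorial_succ]
  push_cast
  field_simp

theorem integral_comp_chordPoint_mul_deriv_weight (hβ : 0 ≤ β) (hγ : β ^ 2 / 4 ≤ γ)
    (hf : ∀ y ∈ Ici 0, HasDerivWithinAt f (f' y) (Ici 0) y) (hf' : ContinuousOn f' (Ici 0))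
    {x : ℝ} (hx : 0 ≤ x) (j : ℕ) :
    ∫ u in (0 : ℝ)..1, f (chordPoint β γ x u) * ((1 - 2 * u) * ((u - u ^ 2) ^ j / j !)) =
      -(2 * β * √x * psiTerm β γ (j + 2) f' x) := by
  have hderiv : ∀ u ∈ [[(0 : ℝ), 1]], HasDerivWithinAt (fun u => f (chordPoint β γ x u))
      (f' (chordPoint β γ x u) * (2 * β * √x)) [[0, 1]] u := by
    rw [uIcc_of_le zero_le_one]
    exact fun u hu => hasDerivWithinAt_comp_chordPoint_right hβ hγ hf hx hu
  have hcont := (continuousOn_comp_chordPoint hβ hγ hf').uncurry_left x hx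
  rw [intervalIntegral.integral_mul_deriv_eq_deriv_mul_of_hasDerivWithinAt hderiv
    (fun u _ => (hasDerivAt_sub_sq_pow_div_factorial j u).hasDerivWithinAt)
    ((hcont.mul continuousOn_const).intervalIntegrable_of_Icc zero_le_one)
    (Continuous.intervalIntegrable (by fun_prop) 0 1)]
  norm_num [psiTerm, ← intervalIntegral.integral_const_mul]
  exact intervalIntegral.integral_congr fun u _ => by ring

end ChordPoint

section PsiTerm

variable {f f' f'' : ℝ → ℝ}

theorem continuousOn_psiTerm (hβ : 0 ≤ β) (hγ : β ^ 2 / 4 ≤ γ) (hf : ContinuousOn f (Ici 0)) :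
    ∀ j, ContinuousOn (psiTerm β γ j f) (Ici 0)
  | 0 => ((continuousOn_comp_chordPoint hβ hγ hf).uncurry_right 1 (by simp)).add
      ((continuousOn_comp_chordPoint hβ hγ hf).uncurry_right 0 (by simp))
  | _ + 1 => continuousOn_intervalIntegral_of_continuousOn_prod isClosed_Ici zero_le_one
      ((continuousOn_comp_chordPoint hβ hγ hf).mul (by fun_prop))

theorem hasDerivAt_psiTerm_zero (hβ : 0 ≤ β) (hγ : β ^ 2 / 4 ≤ γ)
    (hf : ∀ y ∈ Ici 0, HasDerivWithinAt f (f' y) (Ici 0) y)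
    (hf' : ∀ y ∈ Ici 0, HasDerivWithinAt f' (f'' y) (Ici 0) y) (hf'' : ContinuousOn f'' (Ici 0))
    {x : ℝ} (hx : 0 < x) :
    HasDerivAt (psiTerm β γ 0 f) (psiTerm β γ 0 f' x + β ^ 2 * psiTerm β γ 1 f'' x) x := by
  have h1 := hasDerivAt_comp_chordPoint_left hβ hγ hf hx (u := 1) (by simp)
  have h0 := hasDerivAt_comp_chordPoint_left hβ hγ hf hx (u := 0) (by simp)
  have hsub := sub_eq_mul_psiTerm_one hβ hγ hf' hf'' hx.le
  have hβ2 : β / (2 * √x) * (2 * β * √x) = β ^ 2 := by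
    field_simp [(sqrt_pos.2 hx).ne']
  refine (h1.add h0).congr_deriv ?_
  generalize psiTerm β γ 1 f'' x = P at hsub ⊢
  simp only [psiTerm]
  linear_combination β / (2 * √x) * hsub + P * hβ2

theorem integral_comp_chordPoint_mul_slope (hβ : 0 ≤ β) (hγ : β ^ 2 / 4 ≤ γ)
    (hf' : ∀ y ∈ Ici 0, HasDerivWithinAt f' (f'' y) (Ici 0) y) (hf'' : ContinuousOn f'' (Ici 0))
    {x : ℝ} (hx : 0 < x) (j : ℕ) :
    ∫ u in (0 : ℝ)..1,
        f' (chordPoint β γ x u) * (1 + β * (2 * u - 1) / (2 * √x)) * ((u - u ^ 2) ^ j / j !) =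
      psiTerm β γ (j + 1) f' x + β ^ 2 * psiTerm β γ (j + 2) f'' x := by
  have hf'c : ContinuousOn f' (Ici 0) := fun y hy => (hf' y hy).continuousWithinAt
  have hint : ∀ w : ℝ → ℝ, Continuous w →
      IntervalIntegrable (fun u => f' (chordPoint β γ x u) * w u) volume 0 1 := fun w hw =>
    (((continuousOn_comp_chordPoint hβ hγ hf'c).uncurry_left x hx.le).mul
      hw.continuousOn).intervalIntegrable_of_Icc zero_le_one
  calc ∫ u in (0 : ℝ)..1,
        f' (chordPoint β γ x u) * (1 + β * (2 * u - 1) / (2 * √x)) * ((u - u ^ 2) ^ j / j !)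
      = ∫ u in (0 : ℝ)..1, (f' (chordPoint β γ x u) * ((u - u ^ 2) ^ j / j !) -
          β / (2 * √x) * (f' (chordPoint β γ x u) * ((1 - 2 * u) * ((u - u ^ 2) ^ j / j !)))) :=
        intervalIntegral.integral_congr fun u _ => by ring
    _ = psiTerm β γ (j + 1) f' x - β / (2 * √x) * -(2 * β * √x * psiTerm β γ (j + 2) f'' x) := by
        rw [intervalIntegral.integral_sub (hint _ (by fun_prop))
          ((hint _ (by fun_prop)).const_mul _), intervalIntegral.integral_const_mul,
          integral_comp_chordPoint_mul_deriv_weight hβ hγ hf' hf'' hx.le j]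
        rfl
    _ = psiTerm β γ (j + 1) f' x + β ^ 2 * psiTerm β γ (j + 2) f'' x := by
        field_simp [(sqrt_pos.2 hx).ne']
        ring

theorem hasDerivAt_psiTerm_succ (hβ : 0 ≤ β) (hγ : β ^ 2 / 4 ≤ γ)
    (hf : ∀ y ∈ Ici 0, HasDerivWithinAt f (f' y) (Ici 0) y)
    (hf' : ∀ y ∈ Ici 0, HasDerivWithinAt f' (f'' y) (Ici 0) y) (hf'' : ContinuousOn f'' (Ici 0))
    {x : ℝ} (hx : 0 < x) (j : ℕ) :
    HasDerivAt (psiTerm β γ (j + 1) f)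
      (psiTerm β γ (j + 1) f' x + β ^ 2 * psiTerm β γ (j + 2) f'' x) x := by
  have hfc : ContinuousOn f (Ici 0) := fun y hy => (hf y hy).continuousWithinAt
  have hf'c : ContinuousOn f' (Ici 0) := fun y hy => (hf' y hy).continuousWithinAt
  have hslope : ContinuousOn (fun p : ℝ × ℝ => 1 + β * (2 * p.2 - 1) / (2 * √p.1))
      (Ioi 0 ×ˢ Icc 0 1) :=
    continuousOn_const.add ((by fun_prop : Continuous _).continuousOn.div (by fun_prop)
      fun p hp => by have := sqrt_pos.2 hp.1; positivity)
  rw [← integral_comp_chordPoint_mul_slope hβ hγ hf' hf'' hx j]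
  exact hasDerivAt_intervalIntegral_of_continuousOn_prod isOpen_Ioi hx zero_le_one
    (fun y hy => ((continuousOn_comp_chordPoint hβ hγ hfc).uncurry_left y (le_of_lt hy)).mul
      (by fun_prop : Continuous fun u : ℝ => (u - u ^ 2) ^ j / j !).continuousOn)
    ((((continuousOn_comp_chordPoint hβ hγ hf'c).mono
      (prod_mono Ioi_subset_Ici_self subset_rfl)).mul hslope).mul (by fun_prop))
    (fun y hy u hu => (hasDerivAt_comp_chordPoint_left hβ hγ hf hy hu).mul_const
      ((u - u ^ 2) ^ j / j !))

theorem hasDerivWithinAt_psiTerm (hβ : 0 ≤ β) (hγ : β ^ 2 / 4 ≤ γ)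
    (hf : ∀ y ∈ Ici 0, HasDerivWithinAt f (f' y) (Ici 0) y)
    (hf' : ∀ y ∈ Ici 0, HasDerivWithinAt f' (f'' y) (Ici 0) y) (hf'' : ContinuousOn f'' (Ici 0))
    (j : ℕ) {x : ℝ} (hx : x ∈ Ici 0) :
    HasDerivWithinAt (psiTerm β γ j f)
      (psiTerm β γ j f' x + β ^ 2 * psiTerm β γ (j + 1) f'' x) (Ici 0) x := by
  have hfc : ContinuousOn f (Ici 0) := fun y hy => (hf y hy).continuousWithinAt
  have hf'c : ContinuousOn f' (Ici 0) := fun y hy => (hf' y hy).continuousWithinAt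
  refine hasDerivWithinAt_Ici_of_hasDerivAt_Ioi (continuousOn_psiTerm hβ hγ hfc j)
    ((continuousOn_psiTerm hβ hγ hf'c j).add
      (continuousOn_const.mul (continuousOn_psiTerm hβ hγ hf'' (j + 1))))
    (fun y hy => ?_) hx
  cases j with
  | zero => exact hasDerivAt_psiTerm_zero hβ hγ hf hf' hf'' hy
  | succ j => exact hasDerivAt_psiTerm_succ hβ hγ hf hf' hf'' hy j

end PsiTerm

section PsiIterDeriv

theorem psiIterDeriv_zero (g : ℝ → ℝ) :
    psiIterDeriv g β γ 0 = fun x => g (x + β * √x + γ) + g (x - β * √x + γ) := by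
  ext x
  simp [psiIterDeriv, psiTerm, chordPoint_one, chordPoint_zero]

theorem psiIterDeriv_eq (g : ℝ → ℝ) (n : ℕ) (x : ℝ) :
    psiIterDeriv g β γ n x =
      (iteratedDerivWithin n g (Ici 0) (x + β * √x + γ) +
          iteratedDerivWithin n g (Ici 0) (x - β * √x + γ)) +
        ∑ j ∈ Finset.Icc 1 n, (n.choose j : ℝ) * β ^ (2 * j) *
          ∫ u in (0 : ℝ)..1,
            iteratedDerivWithin (n + j) g (Ici 0) (x + β * (2 * u - 1) * √x + γ) *
              ((u - u ^ 2) ^ (j - 1) / (j - 1)! : ℝ) := by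
  rw [psiIterDeriv, Finset.sum_range_succ', add_comm, ← Finset.Ico_add_one_right_eq_Icc,
    Finset.sum_Ico_eq_sum_range]
  simp only [psiTerm, chordPoint_one, chordPoint_zero]
  simp [add_comm 1, chordPoint]

variable {n : ℕ} {g : ℝ → ℝ}

theorem continuousOn_psiIterDeriv (hg : ContDiffOn ℝ (2 * n) g (Ici 0)) (hβ : 0 ≤ β)
    (hγ : β ^ 2 / 4 ≤ γ) : ContinuousOn (psiIterDeriv g β γ n) (Ici 0) := by
  refine continuousOn_finsetSum _ fun j hj => continuousOn_const.mul
    (continuousOn_psiTerm hβ hγ (hg.continuousOn_iteratedDerivWithin ?_ (uniqueDiffOn_Ici 0)) j)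
  have := Finset.mem_range.1 hj
  exact_mod_cast (by omega : n + j ≤ 2 * n)

theorem hasDerivWithinAt_psiIterDeriv (hg : ContDiffOn ℝ (2 * n) g (Ici 0)) (hβ : 0 ≤ β)
    (hγ : β ^ 2 / 4 ≤ γ) {m : ℕ} (hm : m < n) {x : ℝ} (hx : x ∈ Ici 0) :
    HasDerivWithinAt (psiIterDeriv g β γ m) (psiIterDeriv g β γ (m + 1) x) (Ici 0) x := by
  set D : ℕ → ℝ → ℝ := fun k => iteratedDerivWithin k g (Ici 0)
  have hD : ∀ k < 2 * n, ∀ y ∈ Ici (0 : ℝ), HasDerivWithinAt (D k) (D (k + 1) y) (Ici 0) y :=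
    fun k hk y hy => hg.hasDerivWithinAt_iteratedDerivWithin (uniqueDiffOn_Ici 0)
      (by exact_mod_cast hk) hy
  have hterm := HasDerivWithinAt.fun_sum (u := Finset.range (m + 1)) fun j hj =>
    have := Finset.mem_range.1 hj
    (hasDerivWithinAt_psiTerm hβ hγ (hD (m + j) (by omega)) (hD (m + j + 1) (by omega))
      (hg.continuousOn_iteratedDerivWithin (by exact_mod_cast (by omega : m + j + 2 ≤ 2 * n))
        (uniqueDiffOn_Ici 0)) j hx).const_mul ((m.choose j : ℝ) * β ^ (2 * j))
  refine hterm.congr_deriv ?_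
  have hpascal := Finset.sum_choose_succ_mul
    (fun i _ => β ^ (2 * i) * psiTerm β γ i (D (m + 1 + i)) x) m
  simp only [psiIterDeriv, ← mul_assoc] at hpascal ⊢
  rw [hpascal, ← Finset.sum_add_distrib]
  refine Finset.sum_congr rfl fun j _ => ?_
  rw [show m + 1 + j = m + j + 1 by ring, show m + 1 + (j + 1) = m + j + 1 + 1 by ring]
  ring

end PsiIterDeriv

/-- Let `g : [0,∞) → ℝ` be `C^{2n}`, `β ≥ 0`, `γ ≥ β²/4`, and
`ψ_g(x) = g(x + β√x + γ) + g(x - β√x + γ)`.  Then `ψ_g` is `C^n` on `[0,∞)` and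
`ψ_g^{(n)}(x) = ψ_{g^{(n)}}(x) + ∑_{j=1}^n C(n,j) β^{2j}
  ∫_0^1 g^{(n+j)}(x + β(2u-1)√x + γ) (u-u²)^{j-1}/(j-1)! du`. -/
theorem stmt6 (n : ℕ) (g : ℝ → ℝ) (hg : ContDiffOn ℝ (2 * n) g (Set.Ici 0))
    (β γ : ℝ) (hβ : 0 ≤ β) (hγ : β ^ 2 / 4 ≤ γ) :
    ContDiffOn ℝ n
        (fun x => g (x + β * Real.sqrt x + γ) + g (x - β * Real.sqrt x + γ)) (Set.Ici 0) ∧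
    ∀ x ∈ Set.Ici (0 : ℝ),
      iteratedDerivWithin n
          (fun x => g (x + β * Real.sqrt x + γ) + g (x - β * Real.sqrt x + γ)) (Set.Ici 0) x =
        (iteratedDerivWithin n g (Set.Ici 0) (x + β * Real.sqrt x + γ) +
            iteratedDerivWithin n g (Set.Ici 0) (x - β * Real.sqrt x + γ)) +
          ∑ j ∈ Finset.Icc 1 n, (Nat.choose n j : ℝ) * β ^ (2 * j) *
            ∫ u in (0 : ℝ)..1,
              iteratedDerivWithin (n + j) g (Set.Ici 0)
                  (x + β * (2 * u - 1) * Real.sqrt x + γ) *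
                ((u - u ^ 2) ^ (j - 1) / (Nat.factorial (j - 1) : ℝ)) := by
  have hderiv := fun m (hm : m < n) x (hx : x ∈ Ici 0) =>
    hasDerivWithinAt_psiIterDeriv hg hβ hγ hm hx
  rw [← psiIterDeriv_zero]
  refine ⟨contDiffOn_of_hasDerivWithinAt_succ (uniqueDiffOn_Ici 0) hderiv
    (continuousOn_psiIterDeriv hg hβ hγ), fun x hx => ?_⟩
  rw [iteratedDerivWithin_eq_of_hasDerivWithinAt_succ (uniqueDiffOn_Ici 0) hderiv n le_rfl hx,
    psiIterDeriv_eq]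
end

section
/- Fix a ≥ 0, σ > 0, k ∈ ℝ, T > 0 with σ² ≤ 4a. Define X₀(t, x) = e^{−kt} x + ψ_k(t)(a − σ²/4) where ψ_k(t) = (1 − e^{−kt})/k (and ψ_0(t) = t). For f ∈ C^m([0,∞)) with all derivatives up to order m bounded by a constant times (1 + x^L), define ‖f‖_{m,L} = max_{0≤j≤m} sup_{x≥0} |f^{(j)}(x)|/(1 + x^L). Then there is a constant K ≥ 0, independent of f, such that for all t ∈ [0, T], ‖f(X₀(t, ·))‖_{m,L} ≤ e^{Kt} ‖f‖_{m,L}. -/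
/-!
The `j`-th derivative of `x ↦ f (c * x + d)` is `c ^ j • f⁽ʲ⁾ (c * x + d)`. For
`c = e^{-kt} ≤ e^{|k|t}` and `0 ≤ d = ψ_k(t)(a - σ²/4) ≤ t (a - σ²/4) e^{|k|T}`, the weight
grows by at most `1 + (c x + d)^L ≤ e^{L|k|t} (1 + d)^L (1 + x^L)` with `(1 + d)^L ≤ e^{L d}`,
so every factor lost in `‖·‖_{m,L}` is of the form `e^{O(t)}`, uniformly for `t ∈ [0, T]`.
-/

/-- The weighted norm `‖f‖_{m,L} = max_{0≤j≤m} sup_{x≥0} |f^{(j)}(x)|/(1+x^L)`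
(derivatives taken within `[0,∞)`). -/
noncomputable def normML (m L : ℕ) (f : ℝ → ℝ) : ℝ :=
  ⨆ j : Fin (m + 1), ⨆ x : Set.Ici (0 : ℝ),
    |iteratedDerivWithin (j : ℕ) f (Set.Ici 0) (x : ℝ)| / (1 + (x : ℝ) ^ L)

/-- `ψ_k(t) = (1 - e^{-kt})/k`, with `ψ_0(t) = t`. -/
noncomputable def psik (k t : ℝ) : ℝ := if k = 0 then t else (1 - Real.exp (-k * t)) / k

open Set

theorem iteratedDerivWithin_comp_mul_add {𝕜 F : Type*} [NontriviallyNormedField 𝕜]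
    [NormedAddCommGroup F] [NormedSpace 𝕜 F] {n : ℕ} {f : 𝕜 → F} {s t : Set 𝕜}
    (hs : UniqueDiffOn 𝕜 s) (ht : UniqueDiffOn 𝕜 t) (hf : ContDiffOn 𝕜 n f t) {c d : 𝕜}
    (hst : MapsTo (fun x ↦ c * x + d) s t) {x : 𝕜} (hx : x ∈ s) :
    iteratedDerivWithin n (fun x ↦ f (c * x + d)) s x =
      c ^ n • iteratedDerivWithin n f t (c * x + d) := by
  induction n generalizing x with
  | zero => simp
  | succ n ih =>
    have hEq : s.EqOn (iteratedDerivWithin n (fun x ↦ f (c * x + d)) s)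
        (fun x ↦ c ^ n • iteratedDerivWithin n f t (c * x + d)) :=
      fun y hy ↦ ih hf.of_succ hy
    have hDf : DifferentiableWithinAt 𝕜 (iteratedDerivWithin n f t) t (c * x + d) :=
      hf.differentiableOn_iteratedDerivWithin (Nat.cast_lt.mpr n.lt_succ_self) ht _ (hst hx)
    have hA : HasDerivWithinAt (fun x ↦ c * x + d) c s x := by
      simpa using ((hasDerivWithinAt_id x s).const_mul c).add_const d
    have hcomp := (hDf.hasDerivWithinAt.scomp x hA hst).const_smul (c ^ n)
    rw [iteratedDerivWithin_succ, derivWithin_congr hEq (ih hf.of_succ hx),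
      iteratedDerivWithin_succ, pow_succ', mul_comm c, ← smul_smul]
    exact hcomp.derivWithin (hs x hx)

theorem pow_le_one_add_pow_of_le {u : ℝ} (hu : 0 ≤ u) {i L : ℕ} (hi : i ≤ L) :
    u ^ i ≤ 1 + u ^ L := by
  rcases le_total u 1 with h | h
  · exact (pow_le_one₀ hu h).trans (le_add_of_nonneg_right (pow_nonneg hu L))
  · exact (pow_le_pow_right₀ h hi).trans (le_add_of_nonneg_left zero_le_one)

theorem one_add_add_pow_le {u v : ℝ} (hu : 0 ≤ u) (hv : 0 ≤ v) (L : ℕ) :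
    1 + (u + v) ^ L ≤ (1 + v) ^ L * (1 + u ^ L) := by
  have hterm : ∀ i ∈ Finset.range L, u ^ i * v ^ (L - i) * L.choose i ≤
      v ^ (L - i) * L.choose i * (1 + u ^ L) := fun i hi ↦
    calc u ^ i * v ^ (L - i) * L.choose i = v ^ (L - i) * L.choose i * u ^ i := by ring
      _ ≤ _ := by gcongr; exact pow_le_one_add_pow_of_le hu (Finset.mem_range.1 hi).le
  rw [add_pow, add_pow, Finset.sum_range_succ, Finset.sum_range_succ, add_mul, Finset.sum_mul]
  simp only [Nat.sub_self, pow_zero, one_pow, Nat.choose_self, Nat.cast_one, mul_one, one_mul]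
  linarith [Finset.sum_le_sum hterm]

theorem one_add_mul_add_pow_le {c d x E : ℝ} (hc : 0 ≤ c) (hd : 0 ≤ d) (hx : 0 ≤ x)
    (hcE : c ≤ E) (hE : 1 ≤ E) (L : ℕ) :
    1 + (c * x + d) ^ L ≤ E ^ L * (1 + d) ^ L * (1 + x ^ L) := by
  have hcx : (c * x) ^ L ≤ E ^ L * x ^ L := by rw [mul_pow]; gcongr
  have hEL : 1 ≤ E ^ L := one_le_pow₀ hE
  calc 1 + (c * x + d) ^ L ≤ (1 + d) ^ L * (1 + (c * x) ^ L) :=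
        one_add_add_pow_le (by positivity) hd L
    _ ≤ (1 + d) ^ L * (E ^ L * (1 + x ^ L)) := by
        gcongr; nlinarith [pow_nonneg hx L]
    _ = E ^ L * (1 + d) ^ L * (1 + x ^ L) := by ring

theorem normML_nonneg (m L : ℕ) (f : ℝ → ℝ) : 0 ≤ normML m L f :=
  Real.iSup_nonneg fun _ ↦ Real.iSup_nonneg fun x ↦
    div_nonneg (abs_nonneg _) (by have : (0 : ℝ) ≤ x := x.2; positivity)

theorem normML_le {m L : ℕ} {f : ℝ → ℝ} {B : ℝ} (hB : 0 ≤ B)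
    (h : ∀ j ≤ m, ∀ x : ℝ, 0 ≤ x → |iteratedDerivWithin j f (Ici 0) x| ≤ B * (1 + x ^ L)) :
    normML m L f ≤ B :=
  Real.iSup_le (fun j ↦ Real.iSup_le (fun x ↦ by
    have : (0 : ℝ) ≤ x := x.2
    exact (div_le_iff₀ (by positivity)).2 (h j (Nat.lt_succ_iff.1 j.2) x x.2)) hB) hB

theorem abs_iteratedDerivWithin_le_normML {m L : ℕ} {f : ℝ → ℝ}
    (hf : ∃ C : ℝ, ∀ j ≤ m, ∀ x : ℝ, 0 ≤ x →
      |iteratedDerivWithin j f (Ici 0) x| ≤ C * (1 + x ^ L))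
    {j : ℕ} (hj : j ≤ m) {x : ℝ} (hx : 0 ≤ x) :
    |iteratedDerivWithin j f (Ici 0) x| ≤ normML m L f * (1 + x ^ L) := by
  obtain ⟨C, hC⟩ := hf
  have hbdd : ∀ i : Fin (m + 1), BddAbove (range fun y : Ici (0 : ℝ) ↦
      |iteratedDerivWithin i f (Ici 0) y| / (1 + (y : ℝ) ^ L)) := fun i ↦
    ⟨C, forall_mem_range.2 fun y ↦ by
      have : (0 : ℝ) ≤ y := y.2
      exact (div_le_iff₀ (by positivity)).2 (hC i (Nat.lt_succ_iff.1 i.2) y y.2)⟩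
  rw [← div_le_iff₀ (by positivity)]
  exact le_ciSup_of_le (Finite.bddAbove_range _) ⟨j, Nat.lt_succ_of_le hj⟩
    (le_ciSup (hbdd ⟨j, Nat.lt_succ_of_le hj⟩) ⟨x, hx⟩)

theorem normML_comp_mul_add_le {m L : ℕ} {f : ℝ → ℝ} (hf : ContDiffOn ℝ m f (Ici 0))
    (hgrowth : ∃ C : ℝ, ∀ j ≤ m, ∀ x : ℝ, 0 ≤ x →
      |iteratedDerivWithin j f (Ici 0) x| ≤ C * (1 + x ^ L))
    {c d E : ℝ} (hc : 0 ≤ c) (hd : 0 ≤ d) (hcE : c ≤ E) (hE : 1 ≤ E) :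
    normML m L (fun x ↦ f (c * x + d)) ≤ E ^ (m + L) * (1 + d) ^ L * normML m L f := by
  have hmaps : MapsTo (fun x ↦ c * x + d) (Ici 0) (Ici 0) := fun x (hx : 0 ≤ x) ↦
    show 0 ≤ c * x + d by positivity
  have hN := normML_nonneg m L f
  refine normML_le (by positivity) fun j hj x hx ↦ ?_
  rw [iteratedDerivWithin_comp_mul_add (uniqueDiffOn_Ici 0) (uniqueDiffOn_Ici 0)
    (hf.of_le (by exact_mod_cast hj)) hmaps hx, smul_eq_mul, abs_mul, abs_pow, abs_of_nonneg hc]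
  have hcj : c ^ j ≤ E ^ m := (pow_le_pow_left₀ hc hcE j).trans (pow_le_pow_right₀ hE hj)
  calc c ^ j * |iteratedDerivWithin j f (Ici 0) (c * x + d)|
      ≤ E ^ m * (normML m L f * (1 + (c * x + d) ^ L)) :=
        mul_le_mul hcj (abs_iteratedDerivWithin_le_normML hgrowth hj (by positivity))
          (abs_nonneg _) (by positivity)
    _ ≤ E ^ m * (normML m L f * (E ^ L * (1 + d) ^ L * (1 + x ^ L))) := by
        gcongr; exact one_add_mul_add_pow_le hc hd hx hcE hE L
    _ = E ^ (m + L) * (1 + d) ^ L * normML m L f * (1 + x ^ L) := by ring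

theorem psik_nonneg (k : ℝ) {t : ℝ} (ht : 0 ≤ t) : 0 ≤ psik k t := by
  unfold psik
  split_ifs with hk
  · exact ht
  rcases lt_or_gt_of_ne hk with hk | hk
  · exact div_nonneg_of_nonpos (sub_nonpos.2 (Real.one_le_exp_iff.2 (by nlinarith))) hk.le
  · exact div_nonneg (sub_nonneg.2 (Real.exp_le_one_iff.2 (by nlinarith))) hk.le

theorem psik_le_mul_exp (k : ℝ) {t : ℝ} (ht : 0 ≤ t) : psik k t ≤ t * Real.exp (|k| * t) := by
  have hE : 1 ≤ Real.exp (|k| * t) := Real.one_le_exp (by positivity)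
  unfold psik
  split_ifs with hk
  · nlinarith
  rcases lt_or_gt_of_ne hk with hk | hk
  · -- `e^s - 1 ≤ s e^s` for `s = -kt`: multiply `1 - s ≤ e^{-s}` by `e^s`
    have h := Real.add_one_le_exp (k * t)
    rw [abs_of_neg hk, div_le_iff_of_neg hk]
    have hprod : Real.exp (k * t) * Real.exp (-k * t) = 1 := by
      rw [← Real.exp_add]; simp
    nlinarith [Real.exp_pos (-k * t)]
  · have h := Real.one_sub_le_exp_neg (k * t)
    rw [div_le_iff₀ hk, neg_mul]
    nlinarith [mul_nonneg ht hk.le]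

theorem stmt7_general (a σ k T : ℝ)
    (hcond : σ ^ 2 ≤ 4 * a) (m L : ℕ) :
    ∃ K : ℝ, 0 ≤ K ∧ ∀ f : ℝ → ℝ, ContDiffOn ℝ m f (Set.Ici 0) →
      (∃ C : ℝ, ∀ j ≤ m, ∀ x : ℝ, 0 ≤ x →
        |iteratedDerivWithin j f (Set.Ici 0) x| ≤ C * (1 + x ^ L)) →
      ∀ t ∈ Set.Icc (0 : ℝ) T,
        normML m L (fun x => f (Real.exp (-k * t) * x + psik k t * (a - σ ^ 2 / 4))) ≤
          Real.exp (K * t) * normML m L f := by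
  have hb : 0 ≤ a - σ ^ 2 / 4 := by linarith
  refine ⟨(m + L) * |k| + L * ((a - σ ^ 2 / 4) * Real.exp (|k| * T)), by positivity, ?_⟩
  rintro f hf hgrowth t ⟨ht, htT⟩
  set b := a - σ ^ 2 / 4
  have hd : 0 ≤ psik k t * b := mul_nonneg (psik_nonneg k ht) hb
  have hc : Real.exp (-k * t) ≤ Real.exp (|k| * t) :=
    Real.exp_le_exp.2 (mul_le_mul_of_nonneg_right (neg_le_abs k) ht)
  have hdT : psik k t * b ≤ b * Real.exp (|k| * T) * t :=
    calc psik k t * b ≤ t * Real.exp (|k| * t) * b := by gcongr; exact psik_le_mul_exp k ht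
      _ ≤ t * Real.exp (|k| * T) * b := by gcongr
      _ = b * Real.exp (|k| * T) * t := by ring
  have hdL : (1 + psik k t * b) ^ L ≤ Real.exp (L * (b * Real.exp (|k| * T) * t)) := by
    rw [Real.exp_nat_mul]
    refine pow_le_pow_left₀ (by positivity) ?_ L
    linarith [Real.add_one_le_exp (psik k t * b), Real.exp_le_exp.2 hdT]
  calc normML m L (fun x => f (Real.exp (-k * t) * x + psik k t * b))
      ≤ Real.exp (|k| * t) ^ (m + L) * (1 + psik k t * b) ^ L * normML m L f :=
        normML_comp_mul_add_le hf hgrowth (Real.exp_pos _).le hd hc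
          (Real.one_le_exp (by positivity))
    _ ≤ Real.exp (|k| * t) ^ (m + L) * Real.exp (L * (b * Real.exp (|k| * T) * t)) *
          normML m L f := by
        gcongr; exact normML_nonneg m L f
    _ = _ := by
        rw [← Real.exp_nat_mul, ← Real.exp_add]; push_cast; ring_nf

/-- With `X₀(t,x) = e^{-kt} x + ψ_k(t)(a - σ²/4)` and `σ² ≤ 4a`, there is `K ≥ 0`, independent
of `f`, such that `‖f(X₀(t,·))‖_{m,L} ≤ e^{Kt} ‖f‖_{m,L}` for all `t ∈ [0,T]` and all `f` in
the weighted `C^m` space. -/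
theorem stmt7 (a σ k T : ℝ) (ha : 0 ≤ a) (hσ : 0 < σ) (hT : 0 < T)
    (hcond : σ ^ 2 ≤ 4 * a) (m L : ℕ) :
    ∃ K : ℝ, 0 ≤ K ∧ ∀ f : ℝ → ℝ, ContDiffOn ℝ m f (Set.Ici 0) →
      (∃ C : ℝ, ∀ j ≤ m, ∀ x : ℝ, 0 ≤ x →
        |iteratedDerivWithin j f (Set.Ici 0) x| ≤ C * (1 + x ^ L)) →
      ∀ t ∈ Set.Icc (0 : ℝ) T,
        normML m L (fun x => f (Real.exp (-k * t) * x + psik k t * (a - σ ^ 2 / 4))) ≤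
          Real.exp (K * t) * normML m L f :=
  stmt7_general a σ k T hcond m L
end

section
/- Let Y be a symmetric real random variable with all finite moments and E[Y²] = 1, E[Y⁴] = 3 (matching the standard Gaussian), let σ, t ≥ 0, and define X₁(w, x) = (√x + wσ/2)² for x ≥ 0. Then for every polynomial f of degree at most L, x ↦ E[f(X₁(√t·Y, x))] is a polynomial of degree at most L; moreover, writing ‖∑ a_j x^j‖ = ∑ |a_j|, there is a constant C depending only on σ, T, L, E[Y^{2L}] such that ‖E[f(X₁(√t·Y, ·))]‖ ≤ (1 + C t)‖f‖ for all t ∈ [0, T]. -/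
/-!
Expanding `(√x + aY)^(2n)` binomially, the symmetry of `Y` kills the odd moments and with them
the odd powers of `√x`, so `E[(√x + aY)^(2n)]` is a polynomial of degree `n` in `x`. Its
coefficients are nonnegative, the leading one is `1`, and every other one carries a factor
`(a²)^k` with `k ≥ 1`, where `a² = tσ²/4`; for `t ≤ T` it is therefore `O(t)`. Extending linearly
over the monomials of `f` and using the triangle inequality for the `ℓ¹` norm of the coefficients
gives `‖g‖ ≤ (1 + Ct)‖f‖`.
-/

open MeasureTheory

/-- The norm `‖∑ a_j x^j‖ = ∑ |a_j|` on polynomials. -/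
noncomputable def polyNorm (p : Polynomial ℝ) : ℝ :=
  ∑ j ∈ Finset.range (p.natDegree + 1), |p.coeff j|

section

open Polynomial Finset

lemma polyNorm_eq_of_natDegree_le {p : ℝ[X]} {N : ℕ} (h : p.natDegree ≤ N) :
    polyNorm p = ∑ j ∈ range (N + 1), |p.coeff j| := by
  refine sum_subset (range_subset_range.mpr (by omega)) fun j _ hj => ?_
  rw [mem_range, not_lt] at hj
  rw [coeff_eq_zero_of_natDegree_lt (by omega), abs_zero]

lemma polyNorm_zero : polyNorm 0 = 0 := by
  simp [polyNorm]

lemma polyNorm_add_le (p q : ℝ[X]) : polyNorm (p + q) ≤ polyNorm p + polyNorm q := by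
  set N := max p.natDegree q.natDegree
  rw [polyNorm_eq_of_natDegree_le (natDegree_add_le p q), polyNorm_eq_of_natDegree_le
    (le_max_left _ _ : p.natDegree ≤ N), polyNorm_eq_of_natDegree_le (le_max_right _ _ : _ ≤ N),
    ← sum_add_distrib]
  exact sum_le_sum fun j _ => by simpa only [coeff_add] using abs_add_le _ _

lemma polyNorm_sum_le {ι : Type*} (s : Finset ι) (p : ι → ℝ[X]) :
    polyNorm (∑ i ∈ s, p i) ≤ ∑ i ∈ s, polyNorm (p i) :=
  le_sum_of_subadditive polyNorm polyNorm_zero.le polyNorm_add_le s p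

lemma polyNorm_C_mul (a : ℝ) (p : ℝ[X]) : polyNorm (C a * p) = |a| * polyNorm p := by
  rw [polyNorm_eq_of_natDegree_le (natDegree_C_mul_le a p), polyNorm, mul_sum]
  simp only [coeff_C_mul, abs_mul]

lemma polyNorm_X_pow (n : ℕ) : polyNorm (X ^ n) = 1 := by
  simp [polyNorm, coeff_X_pow, apply_ite]

lemma polyNorm_C_mul_X_pow (a : ℝ) (n : ℕ) : polyNorm (C a * X ^ n) = |a| := by
  rw [polyNorm_C_mul, polyNorm_X_pow, mul_one]

noncomputable def monomialMap (Q : ℕ → ℝ[X]) (f : ℝ[X]) : ℝ[X] :=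
  ∑ n ∈ range (f.natDegree + 1), C (f.coeff n) * Q n

lemma natDegree_monomialMap_le {Q : ℕ → ℝ[X]} (hQ : ∀ n, (Q n).natDegree ≤ n) (f : ℝ[X]) :
    (monomialMap Q f).natDegree ≤ f.natDegree :=
  natDegree_sum_le_of_forall_le _ _ fun n hn =>
    (natDegree_C_mul_le _ _).trans <| (hQ n).trans <| Nat.lt_succ_iff.mp (mem_range.mp hn)

lemma polyNorm_monomialMap_le {Q : ℕ → ℝ[X]} {f : ℝ[X]} {K : ℝ}
    (hQ : ∀ n ≤ f.natDegree, polyNorm (Q n) ≤ K) :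
    polyNorm (monomialMap Q f) ≤ K * polyNorm f := by
  calc polyNorm (monomialMap Q f)
      ≤ ∑ n ∈ range (f.natDegree + 1), |f.coeff n| * polyNorm (Q n) := by
        rw [monomialMap]
        simpa only [polyNorm_C_mul] using polyNorm_sum_le _ fun n => C (f.coeff n) * Q n
    _ ≤ ∑ n ∈ range (f.natDegree + 1), |f.coeff n| * K :=
        sum_le_sum fun n hn =>
          mul_le_mul_of_nonneg_left (hQ n (Nat.lt_succ_iff.mp (mem_range.mp hn))) (abs_nonneg _)
    _ = K * polyNorm f := by rw [← sum_mul, mul_comm, polyNorm]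

lemma integral_eval_eq_eval_monomialMap {Ω : Type*} [MeasurableSpace Ω] {P : Measure Ω}
    {Z : Ω → ℝ} {Q : ℕ → ℝ[X]} {x : ℝ} (hZ : ∀ n, Integrable (fun ω => Z ω ^ n) P)
    (hQ : ∀ n, ∫ ω, Z ω ^ n ∂P = (Q n).eval x) (f : ℝ[X]) :
    ∫ ω, f.eval (Z ω) ∂P = (monomialMap Q f).eval x := by
  rw [monomialMap, eval_finsetSum]
  simp only [eval_eq_sum_range (p := f), eval_mul, eval_C]
  rw [integral_finsetSum _ fun n _ => (hZ n).const_mul _]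
  simp only [integral_const_mul, hQ]

noncomputable def shiftedMomentCoeff (M : ℕ → ℝ) (c : ℝ) (n m : ℕ) : ℝ :=
  ((2 * n).choose (2 * m) : ℝ) * c ^ (n - m) * M (2 * (n - m))

/-- For `M` the moments of `Y` and `c = a ^ 2`, this is `x ↦ E[(√x + a Y) ^ (2 * n)]`. -/
noncomputable def shiftedMomentPoly (M : ℕ → ℝ) (c : ℝ) (n : ℕ) : ℝ[X] :=
  ∑ m ∈ range (n + 1), C (shiftedMomentCoeff M c n m) * X ^ m

section ShiftedMoments

variable {M : ℕ → ℝ} {c : ℝ}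

lemma natDegree_shiftedMomentPoly_le (n : ℕ) : (shiftedMomentPoly M c n).natDegree ≤ n :=
  natDegree_sum_le_of_forall_le _ _ fun _ hm =>
    (natDegree_C_mul_X_pow_le _ _).trans (Nat.lt_succ_iff.mp (mem_range.mp hm))

lemma shiftedMomentCoeff_nonneg (hM : ∀ k, 0 ≤ M (2 * k)) (hc : 0 ≤ c) (n m : ℕ) :
    0 ≤ shiftedMomentCoeff M c n m := by
  unfold shiftedMomentCoeff
  have := hM (n - m)
  positivity

lemma polyNorm_shiftedMomentPoly_le (hM0 : M 0 = 1) (hM : ∀ k, 0 ≤ M (2 * k)) (hc : 0 ≤ c)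
    (n : ℕ) : polyNorm (shiftedMomentPoly M c n) ≤ 1 + ∑ m ∈ range n, shiftedMomentCoeff M c n m :=
  calc polyNorm (shiftedMomentPoly M c n)
      ≤ ∑ m ∈ range (n + 1), shiftedMomentCoeff M c n m := by
        refine (polyNorm_sum_le _ _).trans_eq (sum_congr rfl fun m _ => ?_)
        rw [polyNorm_C_mul_X_pow, abs_of_nonneg (shiftedMomentCoeff_nonneg hM hc n m)]
    _ = 1 + ∑ m ∈ range n, shiftedMomentCoeff M c n m := by
        simp [sum_range_succ, shiftedMomentCoeff, hM0, add_comm]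

lemma shiftedMomentCoeff_mul_le (hM : ∀ k, 0 ≤ M (2 * k)) (hc : 0 ≤ c) {r : ℝ} (hr0 : 0 ≤ r)
    (hr1 : r ≤ 1) {n m : ℕ} (hmn : m < n) :
    shiftedMomentCoeff M (r * c) n m ≤ r * shiftedMomentCoeff M c n m :=
  calc shiftedMomentCoeff M (r * c) n m = r ^ (n - m) * shiftedMomentCoeff M c n m := by
        unfold shiftedMomentCoeff
        ring
    _ ≤ r * shiftedMomentCoeff M c n m :=
        mul_le_mul_of_nonneg_right (pow_le_of_le_one hr0 hr1 (by omega))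
          (shiftedMomentCoeff_nonneg hM hc n m)

lemma exists_polyNorm_shiftedMomentPoly_le (hM0 : M 0 = 1) (hM : ∀ k, 0 ≤ M (2 * k)) {s T : ℝ}
    (hs : 0 ≤ s) (hT : 0 < T) (L : ℕ) :
    ∃ C : ℝ, 0 ≤ C ∧ ∀ t ∈ Set.Icc 0 T, ∀ n ≤ L,
      polyNorm (shiftedMomentPoly M (t * s) n) ≤ 1 + C * t := by
  set K : ℕ → ℝ := fun n => ∑ m ∈ range n, shiftedMomentCoeff M (T * s) n m
  have hK : ∀ n, 0 ≤ K n := fun n =>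
    sum_nonneg fun m _ => shiftedMomentCoeff_nonneg hM (by positivity) n m
  refine ⟨(∑ n ∈ range (L + 1), K n) / T, div_nonneg (sum_nonneg fun n _ => hK n) hT.le,
    fun t ⟨ht0, htT⟩ n hn => ?_⟩
  have hr0 : 0 ≤ t / T := by positivity
  have hr1 : t / T ≤ 1 := (div_le_one hT).mpr htT
  have hts : t * s = t / T * (T * s) := by field_simp
  calc polyNorm (shiftedMomentPoly M (t * s) n)
      ≤ 1 + ∑ m ∈ range n, shiftedMomentCoeff M (t * s) n m :=
        polyNorm_shiftedMomentPoly_le hM0 hM (by positivity) n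
    _ ≤ 1 + t / T * K n := by
        rw [hts, mul_sum]
        gcongr with m hm
        exact shiftedMomentCoeff_mul_le hM (by positivity) hr0 hr1 (mem_range.mp hm)
    _ ≤ 1 + t / T * ∑ n ∈ range (L + 1), K n := by
        gcongr
        exact single_le_sum (fun n _ => hK n) (mem_range.mpr (by omega))
    _ = _ := by ring

end ShiftedMoments

lemma sum_range_two_mul_add_one_eq_sum_even {β : Type*} [AddCommMonoid β] {g : ℕ → β} (n : ℕ)
    (hg : ∀ k ≤ 2 * n, Odd k → g k = 0) :
    ∑ k ∈ range (2 * n + 1), g k = ∑ m ∈ range (n + 1), g (2 * m) := by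
  induction n with
  | zero => simp
  | succ n ih =>
    rw [show 2 * (n + 1) + 1 = 2 * n + 1 + 1 + 1 by ring, sum_range_succ, sum_range_succ,
      ih fun k hk => hg k (by omega), hg (2 * n + 1) (by omega) (odd_two_mul_add_one n),
      sum_range_succ (n := n + 1), add_zero, mul_add_one]

lemma sqrt_add_mul_sq_pow_eq_sum (x a y : ℝ) (n : ℕ) :
    ((√x + a * y) ^ 2) ^ n =
      ∑ k ∈ range (2 * n + 1), √x ^ k * a ^ (2 * n - k) * (2 * n).choose k * y ^ (2 * n - k) := by
  rw [← pow_mul, add_pow]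
  exact sum_congr rfl fun k _ => by ring

section Moments

variable {Ω : Type*} [MeasurableSpace Ω] {P : Measure Ω} {Y : Ω → ℝ}

lemma integral_pow_eq_zero_of_odd (hY : AEMeasurable Y P)
    (hsym : P.map Y = P.map (fun ω => -Y ω)) {n : ℕ} (hn : Odd n) : ∫ ω, Y ω ^ n ∂P = 0 := by
  have h : ProbabilityTheory.IdentDistrib Y (fun ω => -Y ω) P P := ⟨hY, hY.neg, hsym⟩
  have := (h.comp (measurable_id.pow_const n)).integral_eq
  simp only [Function.comp_def, id, hn.neg_pow, integral_neg] at this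
  linarith

lemma integrable_sqrt_add_mul_sq_pow (hmom : ∀ n : ℕ, Integrable (fun ω => Y ω ^ n) P)
    (x a : ℝ) (n : ℕ) : Integrable (fun ω => ((√x + a * Y ω) ^ 2) ^ n) P := by
  simp only [sqrt_add_mul_sq_pow_eq_sum]
  exact integrable_finsetSum _ fun k _ => (hmom _).const_mul _

lemma integral_sqrt_add_mul_sq_pow (hY : AEMeasurable Y P)
    (hsym : P.map Y = P.map (fun ω => -Y ω)) (hmom : ∀ n : ℕ, Integrable (fun ω => Y ω ^ n) P)
    {x : ℝ} (hx : 0 ≤ x) (a : ℝ) (n : ℕ) :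
    ∫ ω, ((√x + a * Y ω) ^ 2) ^ n ∂P =
      (shiftedMomentPoly (fun k => ∫ ω, Y ω ^ k ∂P) (a ^ 2) n).eval x := by
  simp only [sqrt_add_mul_sq_pow_eq_sum]
  rw [integral_finsetSum _ fun k _ => (hmom _).const_mul _]
  simp only [integral_const_mul]
  rw [sum_range_two_mul_add_one_eq_sum_even n fun k hk hodd => by
    rw [integral_pow_eq_zero_of_odd hY hsym (by rw [Nat.odd_iff] at hodd ⊢; omega), mul_zero]]
  simp only [shiftedMomentPoly, eval_finsetSum, eval_mul, eval_C, eval_pow, eval_X,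
    shiftedMomentCoeff]
  refine sum_congr rfl fun m hm => ?_
  have hmn : 2 * n - 2 * m = 2 * (n - m) := by omega
  rw [hmn, pow_mul, Real.sq_sqrt hx, pow_mul]
  ring

end Moments

end

theorem stmt8_general {Ω : Type*} [MeasurableSpace Ω] (P : Measure Ω) [IsProbabilityMeasure P]
    (Y : Ω → ℝ)
    (hsym : Measure.map Y P = Measure.map (fun ω => -Y ω) P)
    (hmom : ∀ n : ℕ, Integrable (fun ω => (Y ω) ^ n) P)
    (σ T : ℝ) (hT : 0 < T) (L : ℕ) :
    ∃ C : ℝ, 0 ≤ C ∧ ∀ t ∈ Set.Icc (0 : ℝ) T, ∀ f : Polynomial ℝ, f.natDegree ≤ L →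
      ∃ g : Polynomial ℝ, g.natDegree ≤ L ∧
        (∀ x : ℝ, 0 ≤ x →
          ∫ ω, f.eval ((Real.sqrt x + Real.sqrt t * Y ω * σ / 2) ^ 2) ∂P = g.eval x) ∧
        polyNorm g ≤ (1 + C * t) * polyNorm f := by
  set M : ℕ → ℝ := fun k => ∫ ω, Y ω ^ k ∂P
  have hY : AEMeasurable Y P := by simpa using (hmom 1).aemeasurable
  have hM0 : M 0 = 1 := by simp [M]
  have hM : ∀ k, 0 ≤ M (2 * k) := fun k =>
    integral_nonneg fun ω => (even_two_mul k).pow_nonneg _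
  obtain ⟨C, hC, hbound⟩ :=
    exists_polyNorm_shiftedMomentPoly_le hM0 hM (by positivity : 0 ≤ σ ^ 2 / 4) hT L
  refine ⟨C, hC, fun t ht f hf => ?_⟩
  have ha : (√t * σ / 2) ^ 2 = t * (σ ^ 2 / 4) := by
    rw [div_pow, mul_pow, Real.sq_sqrt ht.1]
    ring
  refine ⟨monomialMap (shiftedMomentPoly M (t * (σ ^ 2 / 4))) f,
    (natDegree_monomialMap_le natDegree_shiftedMomentPoly_le f).trans hf, fun x hx => ?_,
    (polyNorm_monomialMap_le fun n hn => hbound t ht n (hn.trans hf)).trans_eq (by ring)⟩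
  have hshift : ∀ ω, √x + √t * Y ω * σ / 2 = √x + √t * σ / 2 * Y ω := fun ω => by ring
  simp only [hshift, ← ha]
  exact integral_eval_eq_eval_monomialMap (integrable_sqrt_add_mul_sq_pow hmom x _)
    (integral_sqrt_add_mul_sq_pow hY hsym hmom hx _) f

/-- Let `Y` be a symmetric random variable with all moments finite, `E[Y²]=1`, `E[Y⁴]=3`,
and `X₁(w,x) = (√x + wσ/2)²`.  For every polynomial `f` of degree ≤ L,
`x ↦ E[f(X₁(√t Y, x))]` coincides on `[0,∞)` with a polynomial `g` of degree ≤ L, and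
`‖g‖ ≤ (1 + Ct)‖f‖` for a constant `C` depending only on `σ, T, L, E[Y^{2L}]`. -/
theorem stmt8 {Ω : Type*} [MeasurableSpace Ω] (P : Measure Ω) [IsProbabilityMeasure P]
    (Y : Ω → ℝ) (hY : Measurable Y)
    (hsym : Measure.map Y P = Measure.map (fun ω => -Y ω) P)
    (hmom : ∀ n : ℕ, Integrable (fun ω => (Y ω) ^ n) P)
    (hY2 : ∫ ω, (Y ω) ^ 2 ∂P = 1) (hY4 : ∫ ω, (Y ω) ^ 4 ∂P = 3)
    (σ T : ℝ) (hσ : 0 ≤ σ) (hT : 0 < T) (L : ℕ) :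
    ∃ C : ℝ, 0 ≤ C ∧ ∀ t ∈ Set.Icc (0 : ℝ) T, ∀ f : Polynomial ℝ, f.natDegree ≤ L →
      ∃ g : Polynomial ℝ, g.natDegree ≤ L ∧
        (∀ x : ℝ, 0 ≤ x →
          ∫ ω, f.eval ((Real.sqrt x + Real.sqrt t * Y ω * σ / 2) ^ 2) ∂P = g.eval x) ∧
        polyNorm g ≤ (1 + C * t) * polyNorm f :=
  stmt8_general P Y hsym hmom σ T hT L
end

section
/- Let η : ℝ → [0,∞) be a C^∞ even function such that x ↦ η(√x) is completely monotone on [0,∞), i.e., η(√x) = ∫_0^∞ e^{−tx} μ(dt) for a finite positive Borel measure μ. Then for every m ≥ 1 and x > 0, (−1)^m ∂_x^m[η(√x)] = ((m−1)!/2^{2m−1}) x^{−m} η*_m(√x) ≥ 0, where η*_m(y) = (−1)^{m−1} ∑_{j=1}^m c_{j,m} y^j η^{(j)}(y) and the c_{j,m} are defined recursively by c_{1,1} = −1 and c_{j,m} = (2j/(m−1) − 4) c_{j,m−1} 1_{j<m} + (2/(m−1)) c_{j−1,m−1} 1_{j>1}. -/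
open MeasureTheory

lemma ccoef_succ (m : ℕ) (hm : 1 ≤ m) (j : ℕ) :
    ccoef (m + 1) j = (if j < m + 1 then (2 * (j : ℝ) / m - 4) * ccoef m j else 0) +
      (if 1 < j then (2 / (m : ℝ)) * ccoef m (j - 1) else 0) := by
  obtain ⟨n, rfl⟩ : ∃ n, m = n + 1 := ⟨m - 1, by omega⟩
  rw [show n + 1 + 1 = n + 2 from rfl, ccoef]
  push_cast
  norm_num

lemma sum_step (m : ℕ) (hm : 1 ≤ m) (a : ℕ → ℝ) :
    (∑ j ∈ Finset.Icc 1 m, ccoef m j * ((j : ℝ) * a j + a (j + 1))) / 2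
      - m * ∑ j ∈ Finset.Icc 1 m, ccoef m j * a j
    = (m / 4) * ∑ j ∈ Finset.Icc 1 (m + 1), ccoef (m + 1) j * a j := by
  have hm0 : (m : ℝ) ≠ 0 := Nat.cast_ne_zero.mpr (by omega)
  have hR : ∑ j ∈ Finset.Icc 1 (m + 1), ccoef (m + 1) j * a j
      = (∑ j ∈ Finset.Icc 1 m, ((2 * (j : ℝ) / m - 4) * ccoef m j) * a j)
        + ∑ j ∈ Finset.Icc 2 (m + 1), ((2 / (m : ℝ)) * ccoef m (j - 1)) * a j := by
    have h1 : ∀ j ∈ Finset.Icc 1 (m + 1), ccoef (m + 1) j * a j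
        = (if j < m + 1 then ((2 * (j : ℝ) / m - 4) * ccoef m j) * a j else 0)
          + (if 1 < j then ((2 / (m : ℝ)) * ccoef m (j - 1)) * a j else 0) := by
      intro j _
      rw [ccoef_succ m hm j]
      split_ifs <;> ring
    rw [Finset.sum_congr rfl h1, Finset.sum_add_distrib]
    congr 1
    · rw [← Finset.sum_filter]
      apply Finset.sum_congr _ (fun _ _ => rfl)
      ext j
      simp only [Finset.mem_filter, Finset.mem_Icc]
      omega
    · rw [← Finset.sum_filter]
      apply Finset.sum_congr _ (fun _ _ => rfl)
      ext j
      simp only [Finset.mem_filter, Finset.mem_Icc]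
      omega
  have hL : ∑ j ∈ Finset.Icc 1 m, ccoef m j * a (j + 1)
      = ∑ j ∈ Finset.Icc 2 (m + 1), ccoef m (j - 1) * a j := by
    rw [Finset.sum_bij' (fun j _ => j + 1) (fun j _ => j - 1)]
    · intro j hj; simp only [Finset.mem_Icc] at hj ⊢; omega
    · intro j hj; simp only [Finset.mem_Icc] at hj ⊢; omega
    · intro j hj; simp only [Finset.mem_Icc] at hj; omega
    · intro j hj; simp only [Finset.mem_Icc] at hj; omega
    · intro j hj; simp
  have expand : ∑ j ∈ Finset.Icc 1 m, ccoef m j * ((j : ℝ) * a j + a (j + 1))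
      = (∑ j ∈ Finset.Icc 1 m, (j : ℝ) * (ccoef m j * a j))
        + ∑ j ∈ Finset.Icc 2 (m + 1), ccoef m (j - 1) * a j := by
    rw [← hL, ← Finset.sum_add_distrib]
    exact Finset.sum_congr rfl (fun j _ => by ring)
  have e1 : ∀ j ∈ Finset.Icc 1 m,
      (m : ℝ) / 4 * (((2 * (j : ℝ) / m - 4) * ccoef m j) * a j)
        = (j : ℝ) * (ccoef m j * a j) / 2 - m * (ccoef m j * a j) := by
    intro j _; field_simp; ring
  have e2 : ∀ j ∈ Finset.Icc 2 (m + 1),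
      (m : ℝ) / 4 * (((2 / (m : ℝ)) * ccoef m (j - 1)) * a j)
        = ccoef m (j - 1) * a j / 2 := by
    intro j _; field_simp; ring
  have E1 : (m : ℝ) / 4 * ∑ j ∈ Finset.Icc 1 m, ((2 * (j : ℝ) / m - 4) * ccoef m j) * a j
      = (∑ j ∈ Finset.Icc 1 m, (j : ℝ) * (ccoef m j * a j)) / 2
        - m * ∑ j ∈ Finset.Icc 1 m, ccoef m j * a j := by
    rw [Finset.mul_sum, Finset.sum_congr rfl e1, Finset.sum_sub_distrib, ← Finset.mul_sum,
      ← Finset.sum_div]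
  have E2 : (m : ℝ) / 4 * ∑ j ∈ Finset.Icc 2 (m + 1), ((2 / (m : ℝ)) * ccoef m (j - 1)) * a j
      = (∑ j ∈ Finset.Icc 2 (m + 1), ccoef m (j - 1) * a j) / 2 := by
    rw [Finset.mul_sum, Finset.sum_congr rfl e2, ← Finset.sum_div]
  rw [hR, expand, mul_add, E1, E2, add_div]
  ring

lemma comp_sqrt_hasDerivAt (f : ℝ → ℝ) (hf : Differentiable ℝ f) {x : ℝ} (hx : 0 < x) :
    HasDerivAt (fun y => f (Real.sqrt y)) (deriv f (Real.sqrt x) * (1 / (2 * Real.sqrt x))) x :=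
  ((hf (Real.sqrt x)).hasDerivAt).comp x (Real.hasDerivAt_sqrt hx.ne')

lemma f_hasDeriv (η : ℝ → ℝ) (hsmooth : ContDiff ℝ (⊤ : ℕ∞) η) (j : ℕ) (hj : 1 ≤ j) {x : ℝ}
    (hx : 0 < x) :
    HasDerivAt (fun y => Real.sqrt y ^ j * iteratedDeriv j η (Real.sqrt y))
      (((j : ℝ) * (Real.sqrt x ^ j * iteratedDeriv j η (Real.sqrt x))
        + Real.sqrt x ^ (j + 1) * iteratedDeriv (j + 1) η (Real.sqrt x)) / (2 * x)) x := by
  have hs : 0 < Real.sqrt x := Real.sqrt_pos.mpr hx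
  have hsq : Real.sqrt x ^ 2 = x := Real.sq_sqrt hx.le
  have hsqrt := Real.hasDerivAt_sqrt hx.ne'
  have h1 : HasDerivAt (fun y => Real.sqrt y ^ j)
      (((j : ℝ) * Real.sqrt x ^ (j - 1)) * (1 / (2 * Real.sqrt x))) x :=
    (hasDerivAt_pow j (Real.sqrt x)).comp x hsqrt
  have hdiff : Differentiable ℝ (iteratedDeriv j η) :=
    hsmooth.differentiable_iteratedDeriv j (by exact_mod_cast lt_top_iff_ne_top.mpr (by simp))
  have h2 : HasDerivAt (fun y => iteratedDeriv j η (Real.sqrt y))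
      (iteratedDeriv (j + 1) η (Real.sqrt x) * (1 / (2 * Real.sqrt x))) x := by
    rw [iteratedDeriv_succ]
    exact ((hdiff (Real.sqrt x)).hasDerivAt).comp x hsqrt
  refine HasDerivAt.congr_deriv (h1.mul h2) ?_
  obtain ⟨i, rfl⟩ : ∃ i, j = i + 1 := ⟨j - 1, by omega⟩
  set s := Real.sqrt x with hs_def
  rw [← hsq]
  simp only [Nat.add_sub_cancel]
  have hs0 : s ≠ 0 := ne_of_gt hs
  field_simp
  ring

lemma pow_mul_exp_neg_le (k : ℕ) {c t : ℝ} (hc : 0 < c) (ht : 0 ≤ t) :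
    t ^ k * Real.exp (-(t * c)) ≤ (Nat.factorial k : ℝ) / c ^ k := by
  have h1 : (t * c) ^ k / (Nat.factorial k : ℝ) ≤ Real.exp (t * c) :=
    calc (t * c) ^ k / (Nat.factorial k : ℝ)
        ≤ ∑ i ∈ Finset.range (k + 1), (t * c) ^ i / (Nat.factorial i : ℝ) :=
          Finset.single_le_sum (f := fun i => (t * c) ^ i / (Nat.factorial i : ℝ))
            (fun i _ => by positivity) (Finset.self_mem_range_succ k)
      _ ≤ Real.exp (t * c) := Real.sum_le_exp_of_nonneg (by positivity) _
  have hek : (0 : ℝ) < Real.exp (t * c) := Real.exp_pos _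
  have h3 : (t * c) ^ k ≤ (Nat.factorial k : ℝ) * Real.exp (t * c) := by
    rw [div_le_iff₀ (by positivity)] at h1
    linarith
  rw [Real.exp_neg, ← div_eq_mul_inv, div_le_div_iff₀ hek (pow_pos hc k)]
  calc t ^ k * c ^ k = (t * c) ^ k := (mul_pow t c k).symm
    _ ≤ (Nat.factorial k : ℝ) * Real.exp (t * c) := h3

lemma int_rep (η : ℝ → ℝ) (μ : Measure ℝ) [IsFiniteMeasure μ] (hμsupp : μ (Set.Iio 0) = 0)
    (hrep : ∀ x : ℝ, 0 ≤ x → η (Real.sqrt x) = ∫ t, Real.exp (-t * x) ∂μ) (m : ℕ) :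
    ∀ x : ℝ, 0 < x → iteratedDeriv m (fun y => η (Real.sqrt y)) x
      = ∫ t, (-t) ^ m * Real.exp (-t * x) ∂μ := by
  have hae : ∀ᵐ t ∂μ, 0 ≤ t := by
    rw [MeasureTheory.ae_iff]
    convert hμsupp using 2
    ext t
    simp [Set.mem_Iio, not_le]
  induction m with
  | zero =>
    intro x hx
    simp only [iteratedDeriv_zero, pow_zero, one_mul]
    exact hrep x hx.le
  | succ m ih =>
    intro x hx
    have hev : iteratedDeriv m (fun y => η (Real.sqrt y)) =ᶠ[nhds x]
        fun y => ∫ t, (-t) ^ m * Real.exp (-t * y) ∂μ := by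
      filter_upwards [Ioi_mem_nhds hx] with y hy
      exact ih y hy
    rw [iteratedDeriv_succ, hev.deriv_eq]
    have hmeas : ∀ y : ℝ, AEStronglyMeasurable (fun t => (-t) ^ m * Real.exp (-t * y)) μ := by
      intro y
      exact (Continuous.mul (by fun_prop) (by fun_prop)).aestronglyMeasurable
    have key : HasDerivAt (fun y => ∫ t, (-t) ^ m * Real.exp (-t * y) ∂μ)
        (∫ t, (-t) ^ (m + 1) * Real.exp (-t * x) ∂μ) x := by
      refine (hasDerivAt_integral_of_dominated_loc_of_deriv_le (F := fun y t => (-t) ^ m * Real.exp (-t * y))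
        (F' := fun y t => (-t) ^ (m + 1) * Real.exp (-t * y))
        (bound := fun _ => (Nat.factorial (m + 1) : ℝ) / (x / 2) ^ (m + 1))
        (Metric.ball_mem_nhds x (half_pos hx)) (Filter.Eventually.of_forall fun y => hmeas y) ?_
        ((Continuous.mul (by fun_prop) (by fun_prop)).aestronglyMeasurable) ?_
        (integrable_const _) ?_).2
      · -- integrability of F x₀
        apply Integrable.mono' (integrable_const ((Nat.factorial m : ℝ) / x ^ m)) (hmeas x)
        filter_upwards [hae] with t ht
        rw [Real.norm_eq_abs, abs_mul, abs_pow, abs_neg, abs_of_nonneg ht,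
          abs_of_pos (Real.exp_pos _), neg_mul]
        exact pow_mul_exp_neg_le m hx ht
      · -- bound
        filter_upwards [hae] with t ht y hy
        have hy2 : x / 2 < y := by
          rw [Metric.mem_ball, Real.dist_eq, abs_lt] at hy
          linarith
        rw [Real.norm_eq_abs, abs_mul, abs_pow, abs_neg, abs_of_nonneg ht,
          abs_of_pos (Real.exp_pos _)]
        calc t ^ (m + 1) * Real.exp (-t * y) ≤ t ^ (m + 1) * Real.exp (-(t * (x / 2))) := by
              apply mul_le_mul_of_nonneg_left _ (by positivity)
              apply Real.exp_le_exp.mpr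
              nlinarith
          _ ≤ (Nat.factorial (m + 1) : ℝ) / (x / 2) ^ (m + 1) :=
              pow_mul_exp_neg_le (m + 1) (half_pos hx) ht
      · -- differentiability
        apply Filter.Eventually.of_forall
        intro t y hy
        have h := (((hasDerivAt_id y).const_mul (-t)).exp).const_mul ((-t) ^ m)
        simp only [id_eq] at h
        refine h.congr_deriv ?_
        ring
    exact key.deriv

lemma main_id (η : ℝ → ℝ) (hsmooth : ContDiff ℝ (⊤ : ℕ∞) η) (m : ℕ) (hm : 1 ≤ m) :
    ∀ x : ℝ, 0 < x → iteratedDeriv m (fun y => η (Real.sqrt y)) x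
      = -((Nat.factorial (m - 1) : ℝ) / 2 ^ (2 * m - 1)) *
          (∑ j ∈ Finset.Icc 1 m,
            ccoef m j * (Real.sqrt x ^ j * iteratedDeriv j η (Real.sqrt x))) / x ^ m := by
  induction m, hm using Nat.le_induction with
  | base =>
    intro x hx
    have hs : 0 < Real.sqrt x := Real.sqrt_pos.mpr hx
    have hsq : Real.sqrt x ^ 2 = x := Real.sq_sqrt hx.le
    rw [iteratedDeriv_one,
      (comp_sqrt_hasDerivAt η (hsmooth.differentiable (by simp)) hx).deriv]
    simp only [Finset.Icc_self, Finset.sum_singleton, iteratedDeriv_one, pow_one]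
    norm_num [ccoef]
    have hs0 : Real.sqrt x ≠ 0 := ne_of_gt hs
    field_simp
    linear_combination (-1 : ℝ) * deriv η (Real.sqrt x) * hsq
  | succ m hm ih =>
    intro x hx
    have hx0 : x ≠ 0 := hx.ne'
    -- the RHS function for step m
    set K : ℝ := -((Nat.factorial (m - 1) : ℝ) / 2 ^ (2 * m - 1)) with hK
    set g : ℝ → ℝ := fun y => η (Real.sqrt y) with hg
    have hev : iteratedDeriv m g =ᶠ[nhds x]
        (fun y => K * (∑ j ∈ Finset.Icc 1 m,
          ccoef m j * (Real.sqrt y ^ j * iteratedDeriv j η (Real.sqrt y))) / y ^ m) := by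
      filter_upwards [Ioi_mem_nhds hx] with y hy
      exact ih y hy
    rw [iteratedDeriv_succ, hev.deriv_eq]
    -- derivative of the sum
    have hsum : HasDerivAt (fun y => ∑ j ∈ Finset.Icc 1 m,
          ccoef m j * (Real.sqrt y ^ j * iteratedDeriv j η (Real.sqrt y)))
        (∑ j ∈ Finset.Icc 1 m, ccoef m j *
          (((j : ℝ) * (Real.sqrt x ^ j * iteratedDeriv j η (Real.sqrt x))
            + Real.sqrt x ^ (j + 1) * iteratedDeriv (j + 1) η (Real.sqrt x)) / (2 * x))) x := by
      apply HasDerivAt.fun_sum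
      intro j hj
      exact (f_hasDeriv η hsmooth j (Finset.mem_Icc.mp hj).1 hx).const_mul _
    have hdiv : HasDerivAt (fun y => K * (∑ j ∈ Finset.Icc 1 m,
          ccoef m j * (Real.sqrt y ^ j * iteratedDeriv j η (Real.sqrt y))) / y ^ m)
        (((K * ∑ j ∈ Finset.Icc 1 m, ccoef m j *
            (((j : ℝ) * (Real.sqrt x ^ j * iteratedDeriv j η (Real.sqrt x))
              + Real.sqrt x ^ (j + 1) * iteratedDeriv (j + 1) η (Real.sqrt x)) / (2 * x))) * x ^ m
          - (K * ∑ j ∈ Finset.Icc 1 m,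
              ccoef m j * (Real.sqrt x ^ j * iteratedDeriv j η (Real.sqrt x)))
            * ((m : ℝ) * x ^ (m - 1))) / (x ^ m) ^ 2) x :=
      (hsum.const_mul K).div (hasDerivAt_pow m x) (pow_ne_zero m hx0)
    rw [hdiv.deriv]
    -- now algebra
    set a : ℕ → ℝ := fun j => Real.sqrt x ^ j * iteratedDeriv j η (Real.sqrt x) with ha
    have hstep := sum_step m hm a
    have hP : ∑ j ∈ Finset.Icc 1 m, ccoef m j *
          (((j : ℝ) * a j + a (j + 1)) / (2 * x))
        = (∑ j ∈ Finset.Icc 1 m, ccoef m j * ((j : ℝ) * a j + a (j + 1))) / (2 * x) := by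
      rw [Finset.sum_div]
      exact Finset.sum_congr rfl fun j _ => by ring
    rw [hP]
    obtain ⟨k, rfl⟩ : ∃ k, m = k + 1 := ⟨m - 1, by omega⟩
    set P := ∑ j ∈ Finset.Icc 1 (k + 1), ccoef (k + 1) j * ((j : ℝ) * a j + a (j + 1)) with hPdef
    set Q := ∑ j ∈ Finset.Icc 1 (k + 1), ccoef (k + 1) j * a j with hQdef
    set S := ∑ j ∈ Finset.Icc 1 (k + 2), ccoef (k + 2) j * a j with hSdef
    -- hstep : P / 2 - (k+1) * Q = ((k+1)/4) * S
    simp only [Nat.add_sub_cancel] at *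
    have hKval : K = -((Nat.factorial k : ℝ) / 2 ^ (2 * (k + 1) - 1)) := hK
    have h2 : (2 : ℝ) ^ (2 * (k + 1) - 1) = 2 ^ (2 * k + 1) := by norm_num [Nat.mul_add]
    have h3 : (2 : ℝ) ^ (2 * (k + 1 + 1) - 1) = 2 ^ (2 * k + 3) := by
      congr 1
    have hfact : (Nat.factorial (k + 1) : ℝ) = (k + 1) * Nat.factorial k := by
      push_cast [Nat.factorial_succ]
      ring
    rw [hKval, h2, h3, hfact]
    push_cast at hstep ⊢
    have hk1 : (k : ℝ) + 1 ≠ 0 := by positivity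
    have hS : S = (P / 2 - ((k : ℝ) + 1) * Q) * (4 / ((k : ℝ) + 1)) := by
      rw [hstep]
      field_simp
    rw [hS]
    field_simp
    ring

/-- Let `η : ℝ → [0,∞)` be a `C^∞` even function with `η(√x) = ∫_0^∞ e^{-tx} μ(dt)` for a
finite positive Borel measure `μ` on `[0,∞)`.  Then for `m ≥ 1` and `x > 0`,
`(-1)^m ∂_x^m[η(√x)] = ((m-1)!/2^{2m-1}) x^{-m} η*_m(√x) ≥ 0`, where
`η*_m(y) = (-1)^{m-1} ∑_{j=1}^m c_{j,m} y^j η^{(j)}(y)`. -/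
theorem stmt18 (η : ℝ → ℝ) (hpos : ∀ y, 0 ≤ η y) (hsmooth : ContDiff ℝ (⊤ : ℕ∞) η)
    (heven : ∀ y, η (-y) = η y)
    (μ : Measure ℝ) [IsFiniteMeasure μ] (hμsupp : μ (Set.Iio 0) = 0)
    (hrep : ∀ x : ℝ, 0 ≤ x → η (Real.sqrt x) = ∫ t, Real.exp (-t * x) ∂μ)
    (m : ℕ) (hm : 1 ≤ m) (x : ℝ) (hx : 0 < x) :
    (-1 : ℝ) ^ m * iteratedDeriv m (fun y => η (Real.sqrt y)) x =
      (Nat.factorial (m - 1) : ℝ) / 2 ^ (2 * m - 1) / x ^ m *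
        ((-1 : ℝ) ^ (m - 1) *
          ∑ j ∈ Finset.Icc 1 m, ccoef m j * Real.sqrt x ^ j * iteratedDeriv j η (Real.sqrt x)) ∧
    0 ≤ (-1 : ℝ) ^ m * iteratedDeriv m (fun y => η (Real.sqrt y)) x := by
  constructor
  · rw [main_id η hsmooth m hm x hx]
    have hSS : ∑ j ∈ Finset.Icc 1 m, ccoef m j * Real.sqrt x ^ j * iteratedDeriv j η (Real.sqrt x)
        = ∑ j ∈ Finset.Icc 1 m, ccoef m j * (Real.sqrt x ^ j * iteratedDeriv j η (Real.sqrt x)) :=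
      Finset.sum_congr rfl fun j _ => mul_assoc _ _ _
    rw [hSS]
    obtain ⟨k, rfl⟩ : ∃ k, m = k + 1 := ⟨m - 1, by omega⟩
    simp only [Nat.add_sub_cancel]
    ring
  · rw [int_rep η μ hμsupp hrep m x hx]
    have hae : ∀ᵐ t ∂μ, 0 ≤ t := by
      rw [MeasureTheory.ae_iff]
      convert hμsupp using 2
      ext t
      simp [Set.mem_Iio, not_le]
    have hmul : (-1 : ℝ) ^ m * ∫ t, (-t) ^ m * Real.exp (-t * x) ∂μ
        = ∫ t, t ^ m * Real.exp (-t * x) ∂μ := by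
      rw [← integral_const_mul]
      congr 1
      ext t
      rw [← mul_assoc, ← mul_pow]
      norm_num
    rw [hmul]
    apply integral_nonneg_of_ae
    filter_upwards [hae] with t ht
    positivity
end
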